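/- arXiv:2509.14552 — 8 statements merged into one kernel-verified Lean document; each statement's English description precedes it below -/
import Mathlib

section
/- Let B be a ring, A a subring of B, and x an element of B. Assume that (i) A is left Noetherian, (ii) Ax + A = xA + A as additive subgroups of B, and (iii) B = Σ_{k≥0} A x^k. Then B is left Noetherian. -/
/-!
Filter `B` by `Fₙ = Σ_{i<n} A xⁱ`. The hypothesis `Ax + A = xA + A` gives `x Fₙ ⊆ Fₙ₊₁` and
`Fₙ₊₁ = xⁿ A + Fₙ`, so every element of `Fₙ₊₁` has a leading coefficient `c` with
`f - xⁿ c ∈ Fₙ`. As in the Hilbert basis theorem, sending a left ideal `K` of `B` to the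
increasing sequence of left ideals `Lₙ(K) = {c | xⁿ c ∈ K + Fₙ}` of `A` is strictly monotone, and
increasing sequences of left ideals of a Noetherian ring satisfy the ascending chain condition.
-/

open Filter

theorem OrderHom.wellFoundedGT_nat {α : Type*} [PartialOrder α] [WellFoundedGT α] :
    WellFoundedGT (ℕ →o α) := by
  rw [wellFoundedGT_iff_monotone_chain_condition]
  intro f
  obtain ⟨K, hK⟩ := wellFoundedGT_iff_monotone_chain_condition.mp ‹_›
    ⟨fun k ↦ f k k, fun i j h ↦ (f.mono h i).trans ((f j).mono h)⟩
  -- `f k n` is squeezed between `f K K` and the diagonal term at `max k n`.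
  have hcorner : ∀ k ≥ K, ∀ n ≥ K, f k n = f K K := fun k hk n hn ↦ le_antisymm
    (((f.mono (le_max_left k n)) n).trans <| ((f _).mono (le_max_right k n)).trans
      (hK _ (hk.trans (le_max_left k n))).ge)
    ((f.mono hk K).trans ((f k).mono hn))
  have hcolumn : ∀ n, ∀ᶠ k in atTop, ∀ m ≥ k, f m n = f k n := fun n ↦ by
    obtain ⟨k₀, hk₀⟩ := wellFoundedGT_iff_monotone_chain_condition.mp ‹_›
      ⟨fun k ↦ f k n, fun i j h ↦ f.mono h n⟩
    exact eventually_atTop.2 ⟨k₀, fun k hk m hm ↦ (hk₀ m (hk.trans hm)).symm.trans (hk₀ k hk)⟩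
  obtain ⟨k, hlow, hkK⟩ := (((eventually_all_finset (Finset.range K)).2
    fun n _ ↦ hcolumn n).and (eventually_ge_atTop K)).exists
  refine ⟨k, fun m hm ↦ OrderHom.ext _ _ (funext fun n ↦ ?_)⟩
  rcases lt_or_ge n K with hn | hn
  · exact (hlow n (Finset.mem_range.2 hn) m hm).symm
  · exact (hcorner k hkK n hn).trans (hcorner m (hkK.trans hm) n hn).symm

theorem AddSubgroup.mem_closure_setOf_add {M N G : Type*} [AddGroup M] [AddGroup N]
    [AddCommGroup G] (f : M →+ G) (g : N →+ G) {y : G} :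
    y ∈ closure {z | ∃ m n, z = f m + g n} ↔ ∃ m n, y = f m + g n := by
  refine ⟨fun hy ↦ ?_, fun hy ↦ subset_closure hy⟩
  induction hy using closure_induction with
  | mem z hz => exact hz
  | zero => exact ⟨0, 0, by simp⟩
  | add z w _ _ hz hw =>
    obtain ⟨m, n, rfl⟩ := hz
    obtain ⟨m', n', rfl⟩ := hw
    exact ⟨m + m', n + n', by simp only [map_add]; abel⟩
  | neg z _ hz =>
    obtain ⟨m, n, rfl⟩ := hz
    exact ⟨-m, -n, by simp only [map_neg]; abel⟩

namespace Subring

variable {B : Type*} [Ring B] (A : Subring B) (x : B)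

def powFiltration : ℕ → Submodule A B
  | 0 => ⊥
  | n + 1 => powFiltration n ⊔ A ∙ x ^ n

local notation "F" => powFiltration A x

variable {A x}

theorem powFiltration_zero : F 0 = ⊥ := rfl

theorem mem_powFiltration_succ {n : ℕ} {p : B} :
    p ∈ F (n + 1) ↔ ∃ z ∈ F n, ∃ a : A, p = z + a * x ^ n := by
  simp only [powFiltration, Submodule.mem_sup, Submodule.mem_span_singleton, Subring.smul_def,
    smul_eq_mul]
  constructor
  · rintro ⟨z, hz, _, ⟨a, rfl⟩, rfl⟩
    exact ⟨z, hz, a, rfl⟩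
  · rintro ⟨z, hz, a, rfl⟩
    exact ⟨z, hz, _, ⟨a, rfl⟩, rfl⟩

theorem powFiltration_mono : Monotone F :=
  monotone_nat_of_le_succ fun _ ↦ le_sup_left

theorem mul_pow_mem_powFiltration (a : A) {k n : ℕ} (h : k < n) : a * x ^ k ∈ F n :=
  powFiltration_mono h (mem_powFiltration_succ.2 ⟨0, zero_mem _, a, (zero_add _).symm⟩)

theorem mul_mem_powFiltration_succ (hxA : ∀ a : A, ∃ c d : A, x * a = c * x + d) {n : ℕ}
    {p : B} (hp : p ∈ F n) : x * p ∈ F (n + 1) := by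
  induction n generalizing p with
  | zero =>
    rw [powFiltration_zero, Submodule.mem_bot] at hp
    simp [hp]
  | succ n ih =>
    obtain ⟨z, hz, a, rfl⟩ := mem_powFiltration_succ.1 hp
    obtain ⟨c, d, hcd⟩ := hxA a
    have : x * (z + a * x ^ n) = x * z + (c * x ^ (n + 1) + d * x ^ n) := by
      rw [mul_add, ← mul_assoc, hcd, add_mul, mul_assoc, pow_succ']
    rw [this]
    exact add_mem (powFiltration_mono (Nat.le_succ _) (ih hz))
      (add_mem (mul_pow_mem_powFiltration c (by omega)) (mul_pow_mem_powFiltration d (by omega)))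

theorem pow_mul_mem_powFiltration (hxA : ∀ a : A, ∃ c d : A, x * a = c * x + d) (n : ℕ) (a : A) :
    x ^ n * a ∈ F (n + 1) := by
  induction n with
  | zero => simpa using mul_pow_mem_powFiltration (x := x) a zero_lt_one
  | succ n ih =>
    rw [pow_succ', mul_assoc]
    exact mul_mem_powFiltration_succ hxA ih

theorem mul_mem_powFiltration (hxA : ∀ a : A, ∃ c d : A, x * a = c * x + d) {n : ℕ} {p : B}
    (hp : p ∈ F n) (a : A) : p * a ∈ F n := by
  induction n generalizing p with
  | zero =>
    rw [powFiltration_zero, Submodule.mem_bot] at hp ⊢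
    simp [hp]
  | succ n ih =>
    obtain ⟨z, hz, c, rfl⟩ := mem_powFiltration_succ.1 hp
    rw [add_mul, mul_assoc]
    exact add_mem (powFiltration_mono (Nat.le_succ _) (ih hz))
      (Submodule.smul_mem _ c (pow_mul_mem_powFiltration hxA n a))

theorem exists_sub_pow_mul_mem_powFiltration (hxA : ∀ a : A, ∃ c d : A, x * a = c * x + d)
    (hAx : ∀ a : A, ∃ c d : A, a * x = x * c + d) {n : ℕ} {p : B} (hp : p ∈ F (n + 1)) :
    ∃ c : A, p - x ^ n * c ∈ F n := by
  induction n generalizing p with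
  | zero =>
    obtain ⟨z, hz, a, rfl⟩ := mem_powFiltration_succ.1 hp
    exact ⟨a, by simpa using hz⟩
  | succ n ih =>
    obtain ⟨z, hz, a, rfl⟩ := mem_powFiltration_succ.1 hp
    obtain ⟨c, d, hcd⟩ := hAx a
    obtain ⟨c', hc'⟩ := ih (mul_pow_mem_powFiltration c n.lt_succ_self)
    have : z + a * x ^ (n + 1) - x ^ (n + 1) * c' =
        z + x * (c * x ^ n - x ^ n * c') + d * x ^ n := by
      rw [pow_succ', ← mul_assoc (a : B), hcd]
      noncomm_ring
    refine ⟨c', this ▸ add_mem (add_mem hz (mul_mem_powFiltration_succ hxA hc'))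
      (mul_pow_mem_powFiltration d n.lt_succ_self)⟩

/-- Coefficients sit to the right of `x ^ n` so that left multiplication by `x` maps the `n`-th
ideal into the `(n + 1)`-st. -/
def leadingIdeal (hxA : ∀ a : A, ∃ c d : A, x * a = c * x + d) (K : Ideal B) (n : ℕ) :
    Ideal A where
  carrier := {a | ∃ f ∈ K, f - x ^ n * a ∈ F n}
  zero_mem' := ⟨0, zero_mem _, by simp⟩
  add_mem' := by
    rintro a b ⟨f, hf, hfa⟩ ⟨g, hg, hgb⟩
    refine ⟨f + g, add_mem hf hg, ?_⟩
    convert add_mem hfa hgb using 1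
    push_cast
    noncomm_ring
  smul_mem' := by
    rintro d a ⟨f, hf, hfa⟩
    obtain ⟨z, hz, c, hzc⟩ := mem_powFiltration_succ.1 (pow_mul_mem_powFiltration hxA n d)
    refine ⟨c * f, K.mul_mem_left _ hf, ?_⟩
    have : c * f - x ^ n * ((d • a : A) : B) = c • (f - x ^ n * a) - z * a := by
      rw [smul_eq_mul, Subring.coe_mul, ← mul_assoc, hzc, Subring.smul_def, smul_eq_mul]
      noncomm_ring
    rw [this]
    exact sub_mem (Submodule.smul_mem _ c hfa) (mul_mem_powFiltration hxA hz a)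

theorem leadingIdeal_mono (hxA : ∀ a : A, ∃ c d : A, x * a = c * x + d) {J K : Ideal B}
    (h : J ≤ K) (n : ℕ) : leadingIdeal hxA J n ≤ leadingIdeal hxA K n :=
  fun _ ⟨f, hf, hfa⟩ ↦ ⟨f, h hf, hfa⟩

theorem monotone_leadingIdeal (hxA : ∀ a : A, ∃ c d : A, x * a = c * x + d) (K : Ideal B) :
    Monotone (leadingIdeal hxA K) :=
  monotone_nat_of_le_succ fun n a ⟨f, hf, hfa⟩ ↦ ⟨x * f, K.mul_mem_left x hf, by
    simpa [mul_sub, ← mul_assoc, ← pow_succ'] using mul_mem_powFiltration_succ hxA hfa⟩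

theorem le_of_leadingIdeal_le (hxA : ∀ a : A, ∃ c d : A, x * a = c * x + d)
    (hAx : ∀ a : A, ∃ c d : A, a * x = x * c + d) (hF : ∀ b, ∃ n, b ∈ F n) {J K : Ideal B}
    (hJK : J ≤ K) (h : ∀ n, leadingIdeal hxA K n ≤ leadingIdeal hxA J n) : K ≤ J := by
  suffices ∀ n, ∀ f ∈ K, f ∈ F n → f ∈ J from fun f hf ↦ (hF f).elim (this · f hf)
  intro n
  induction n with
  | zero =>
    intro f _ hf
    rw [powFiltration_zero, Submodule.mem_bot] at hf
    exact hf ▸ zero_mem J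
  | succ n ih =>
    intro f hfK hf
    obtain ⟨c, hc⟩ := exists_sub_pow_mul_mem_powFiltration hxA hAx hf
    obtain ⟨g, hg, hgc⟩ := h n ⟨f, hfK, hc⟩
    have hfg : f - g ∈ J := ih _ (sub_mem hfK (hJK hg)) (by simpa using sub_mem hc hgc)
    simpa using add_mem hfg hg

theorem exists_mem_powFiltration
    (hgen : AddSubgroup.closure {b : B | ∃ (a : A) (k : ℕ), b = a * x ^ k} = ⊤) (b : B) :
    ∃ n, b ∈ F n := by
  have hle : AddSubgroup.closure {b : B | ∃ (a : A) (k : ℕ), b = a * x ^ k} ≤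
      (⨆ n, F n).toAddSubgroup := by
    rw [AddSubgroup.closure_le]
    rintro _ ⟨a, k, rfl⟩
    exact Submodule.mem_iSup_of_mem (k + 1) (mul_pow_mem_powFiltration a k.lt_succ_self)
  rw [hgen] at hle
  exact (Submodule.mem_iSup_of_directed _ powFiltration_mono.directed_le).1
    (hle (AddSubgroup.mem_top b))

theorem isNoetherianRing_of_forall_mem_powFiltration [IsNoetherianRing A]
    (hxA : ∀ a : A, ∃ c d : A, x * a = c * x + d) (hAx : ∀ a : A, ∃ c d : A, a * x = x * c + d)
    (hF : ∀ b, ∃ n, b ∈ F n) : IsNoetherianRing B := by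
  let leading (K : Ideal B) : ℕ →o Ideal A := ⟨leadingIdeal hxA K, monotone_leadingIdeal hxA K⟩
  have hleading : StrictMono leading := fun J K h ↦ lt_of_le_not_ge (leadingIdeal_mono hxA h.le)
    fun h' ↦ h.not_ge (le_of_leadingIdeal_le hxA hAx hF h.le h')
  have := OrderHom.wellFoundedGT_nat (α := Ideal A)
  exact isNoetherian_iff'.2 hleading.wellFoundedGT

end Subring

/-- Let `B` be a ring, `A` a subring of `B`, and `x ∈ B`. Assume that
(i) `A` is left Noetherian, (ii) `Ax + A = xA + A` as additive subgroups of `B`, and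
(iii) `B = Σ_{k ≥ 0} A x^k`.  Then `B` is left Noetherian. -/
theorem left_noetherian_of_subring_pow
    (B : Type*) [Ring B] (A : Subring B) (x : B)
    (hNoeth : IsNoetherianRing A)
    (hAx : AddSubgroup.closure {b : B | ∃ a a' : A, b = (a : B) * x + (a' : B)} =
           AddSubgroup.closure {b : B | ∃ a a' : A, b = x * (a : B) + (a' : B)})
    (hgen : AddSubgroup.closure {b : B | ∃ (a : A) (k : ℕ), b = (a : B) * x ^ k} = ⊤) :
    IsNoetherianRing B := by
  have hxA : ∀ a : A, ∃ c d : A, x * a = c * x + d := fun a ↦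
    (AddSubgroup.mem_closure_setOf_add ((AddMonoidHom.mulRight x).comp A.subtype.toAddMonoidHom)
      A.subtype.toAddMonoidHom).1 (hAx ▸ AddSubgroup.subset_closure ⟨a, 0, by simp⟩)
  have hAx' : ∀ a : A, ∃ c d : A, a * x = x * c + d := fun a ↦
    (AddSubgroup.mem_closure_setOf_add ((AddMonoidHom.mulLeft x).comp A.subtype.toAddMonoidHom)
      A.subtype.toAddMonoidHom).1 (hAx ▸ AddSubgroup.subset_closure ⟨a, 0, by simp⟩)
  exact Subring.isNoetherianRing_of_forall_mem_powFiltration hxA hAx'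
    (Subring.exists_mem_powFiltration hgen)
end

section
/- Let B be a ring, A a subring of B, and x ∈ B with [A,x]_q ⊆ A in the sense that for every a ∈ A there exist a', a'' ∈ A with ax = xa' + a''. If A is right Noetherian, Ax + A = xA + A, and B = Σ_{k≥0} x^k A, then B is right Noetherian. -/
open AddSubgroup MulOpposite

namespace RNSP

variable {B : Type*} [Ring B] {A : Subring B} {x : B}

/-- The filtration: additive subgroup generated by `x^k * a` for `k < n`. -/
def C (A : Subring B) (x : B) (n : ℕ) : AddSubgroup B :=
  AddSubgroup.closure {b | ∃ (a : A) (k : ℕ), k < n ∧ b = x ^ k * (a : B)}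

lemma mem_C_of (a : A) {k n : ℕ} (h : k < n) : x ^ k * (a : B) ∈ C A x n :=
  subset_closure ⟨a, k, h, rfl⟩

lemma C_mono {n m : ℕ} (h : n ≤ m) : C A x n ≤ C A x m :=
  closure_mono (fun _ ⟨a, k, hk, hb⟩ => ⟨a, k, hk.trans_le h, hb⟩)

lemma C_zero : C A x 0 = ⊥ := by
  have h : {b | ∃ (a : A) (k : ℕ), k < 0 ∧ b = x ^ k * (a : B)} = (∅ : Set B) := by
    ext b; simp
  rw [C, h, AddSubgroup.closure_empty]

/-- Right multiplication by `A` preserves `C n`. -/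
lemma mul_A_mem {n : ℕ} {b : B} (hb : b ∈ C A x n) (c : A) : b * (c : B) ∈ C A x n := by
  refine AddSubgroup.closure_induction
    (p := fun b _ => b * (c : B) ∈ C A x n) ?_ ?_ ?_ ?_ hb
  · rintro b ⟨a, k, hk, rfl⟩
    have h : x ^ k * (a : B) * (c : B) = x ^ k * ((a * c : A) : B) := by
      push_cast; rw [mul_assoc]
    rw [h]; exact mem_C_of _ hk
  · simpa using zero_mem (C A x _)
  · intro u v _ _ hu hv; rw [add_mul]; exact add_mem hu hv
  · intro u _ hu; rw [neg_mul]; exact neg_mem hu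

/-- Left multiplication by `x` shifts the filtration. -/
lemma x_mul_mem {n : ℕ} {b : B} (hb : b ∈ C A x n) : x * b ∈ C A x (n + 1) := by
  refine AddSubgroup.closure_induction
    (p := fun b _ => x * b ∈ C A x (n + 1)) ?_ ?_ ?_ ?_ hb
  · rintro b ⟨a, k, hk, rfl⟩
    rw [← mul_assoc, ← pow_succ']
    exact mem_C_of _ (by omega)
  · simpa using zero_mem (C A x _)
  · intro u v _ _ hu hv; rw [mul_add]; exact add_mem hu hv
  · intro u _ hu; rw [mul_neg]; exact neg_mem hu

section hq

variable (hq : ∀ a : A, ∃ a' a'' : A, (a : B) * x = x * (a' : B) + (a'' : B))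
include hq

/-- Right multiplication by `x` shifts the filtration. -/
lemma mul_x_mem {n : ℕ} {b : B} (hb : b ∈ C A x n) : b * x ∈ C A x (n + 1) := by
  refine AddSubgroup.closure_induction
    (p := fun b _ => b * x ∈ C A x (n + 1)) ?_ ?_ ?_ ?_ hb
  · rintro b ⟨a, k, hk, rfl⟩
    obtain ⟨a', a'', hA⟩ := hq a
    have h : x ^ k * (a : B) * x = x ^ (k + 1) * (a' : B) + x ^ k * (a'' : B) := by
      rw [mul_assoc, hA, pow_succ]; noncomm_ring
    rw [h]
    exact add_mem (mem_C_of _ (by omega)) (mem_C_of _ (by omega))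
  · simpa using zero_mem (C A x _)
  · intro u v _ _ hu hv; rw [add_mul]; exact add_mem hu hv
  · intro u _ hu; rw [neg_mul]; exact neg_mem hu

/-- `a * x^k ∈ C (k+1)`. -/
lemma A_mul_pow_mem (k : ℕ) : ∀ a : A, (a : B) * x ^ k ∈ C A x (k + 1) := by
  induction k with
  | zero =>
    intro a
    simpa using mem_C_of (x := x) (k := 0) (n := 1) a Nat.zero_lt_one
  | succ k ih =>
    intro a
    obtain ⟨a', a'', hA⟩ := hq a
    have h1 : (a : B) * x ^ (k + 1) = x * ((a' : B) * x ^ k) + (a'' : B) * x ^ k := by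
      rw [pow_succ']
      calc (a : B) * (x * x ^ k) = ((a : B) * x) * x ^ k := by rw [mul_assoc]
        _ = (x * (a' : B) + (a'' : B)) * x ^ k := by rw [hA]
        _ = x * ((a' : B) * x ^ k) + (a'' : B) * x ^ k := by noncomm_ring
    rw [h1]
    exact add_mem (x_mul_mem (ih a')) (C_mono (by omega) (ih a''))

/-- Straightening: move `a` from the left of `x^k` to the right, mod lower terms. -/
lemma exists_straighten_left (k : ℕ) : ∀ a : A,
    ∃ a' : A, (a : B) * x ^ k - x ^ k * (a' : B) ∈ C A x k := by
  induction k with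
  | zero => intro a; exact ⟨a, by simpa using zero_mem (C A x 0)⟩
  | succ k ih =>
    intro a
    obtain ⟨a₁, a₂, hA⟩ := hq a
    obtain ⟨a₁', h₁⟩ := ih a₁
    refine ⟨a₁', ?_⟩
    have h : (a : B) * x ^ (k + 1) - x ^ (k + 1) * (a₁' : B) =
        x * ((a₁ : B) * x ^ k - x ^ k * (a₁' : B)) + (a₂ : B) * x ^ k := by
      rw [pow_succ']
      calc (a : B) * (x * x ^ k) - x * x ^ k * (a₁' : B)
          = ((a : B) * x) * x ^ k - x * x ^ k * (a₁' : B) := by noncomm_ring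
        _ = (x * (a₁ : B) + (a₂ : B)) * x ^ k - x * x ^ k * (a₁' : B) := by rw [hA]
        _ = x * ((a₁ : B) * x ^ k - x ^ k * (a₁' : B)) + (a₂ : B) * x ^ k := by noncomm_ring
    rw [h]
    exact add_mem (x_mul_mem h₁) (A_mul_pow_mem hq k a₂)

/-- Left multiplication by `A` preserves `C n`. -/
lemma A_mul_mem {n : ℕ} {b : B} (hb : b ∈ C A x n) (c : A) : (c : B) * b ∈ C A x n := by
  refine AddSubgroup.closure_induction
    (p := fun b _ => (c : B) * b ∈ C A x n) ?_ ?_ ?_ ?_ hb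
  · rintro b ⟨a, k, hk, rfl⟩
    obtain ⟨c', hc'⟩ := exists_straighten_left hq k c
    have h : (c : B) * (x ^ k * (a : B)) =
        ((c : B) * x ^ k - x ^ k * (c' : B)) * (a : B) + x ^ k * ((c' * a : A) : B) := by
      push_cast; noncomm_ring
    rw [h]
    exact add_mem (mul_A_mem (C_mono hk.le hc') a) (mem_C_of _ hk)
  · simpa using zero_mem (C A x _)
  · intro u v _ _ hu hv; rw [mul_add]; exact add_mem hu hv
  · intro u _ hu; rw [mul_neg]; exact neg_mem hu

variable (hxA : ∀ a : A, ∃ a₁ a₂ : A, x * (a : B) = (a₁ : B) * x + (a₂ : B))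
include hxA

/-- Straightening in the other direction: move `a` from the right of `x^k` to the left. -/
lemma exists_straighten_right (k : ℕ) : ∀ a : A,
    ∃ a' : A, x ^ k * (a : B) - (a' : B) * x ^ k ∈ C A x k := by
  induction k with
  | zero => intro a; exact ⟨a, by simpa using zero_mem (C A x 0)⟩
  | succ k ih =>
    intro a
    obtain ⟨a₁, h₁⟩ := ih a
    obtain ⟨a₂, a₃, hA⟩ := hxA a₁
    refine ⟨a₂, ?_⟩
    have h : x ^ (k + 1) * (a : B) - (a₂ : B) * x ^ (k + 1) =
        x * (x ^ k * (a : B) - (a₁ : B) * x ^ k) + (a₃ : B) * x ^ k := by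
      rw [pow_succ']
      calc x * x ^ k * (a : B) - (a₂ : B) * (x * x ^ k)
          = x * (x ^ k * (a : B) - (a₁ : B) * x ^ k) + (x * (a₁ : B)) * x ^ k
            - ((a₂ : B) * x) * x ^ k := by noncomm_ring
        _ = x * (x ^ k * (a : B) - (a₁ : B) * x ^ k) + ((a₂ : B) * x + (a₃ : B)) * x ^ k
            - ((a₂ : B) * x) * x ^ k := by rw [hA]
        _ = x * (x ^ k * (a : B) - (a₁ : B) * x ^ k) + (a₃ : B) * x ^ k := by noncomm_ring
    rw [h]
    exact add_mem (x_mul_mem h₁) (A_mul_pow_mem hq k a₃)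

/-- Every element of `C (n+1)` is `a * x^n` mod `C n`. -/
lemma exists_lead {n : ℕ} {b : B} (hb : b ∈ C A x (n + 1)) :
    ∃ a : A, b - (a : B) * x ^ n ∈ C A x n := by
  refine AddSubgroup.closure_induction
    (p := fun b _ => ∃ a : A, b - (a : B) * x ^ n ∈ C A x n) ?_ ?_ ?_ ?_ hb
  · rintro b ⟨a, k, hk, rfl⟩
    rcases eq_or_lt_of_le (Nat.lt_succ_iff.mp hk) with h | h
    · subst h; exact exists_straighten_right hq hxA _ a
    · refine ⟨0, ?_⟩
      have h0 : x ^ k * (a : B) - ((0 : A) : B) * x ^ n = x ^ k * (a : B) := by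
        push_cast; noncomm_ring
      rw [h0]; exact mem_C_of a h
  · refine ⟨0, ?_⟩
    have h0 : (0 : B) - ((0 : A) : B) * x ^ n = 0 := by push_cast; noncomm_ring
    rw [h0]; exact zero_mem _
  · rintro u v _ _ ⟨a, ha⟩ ⟨a', ha'⟩
    refine ⟨a + a', ?_⟩
    have h : u + v - ((a + a' : A) : B) * x ^ n =
        (u - (a : B) * x ^ n) + (v - (a' : B) * x ^ n) := by push_cast; noncomm_ring
    rw [h]; exact add_mem ha ha'
  · rintro u _ ⟨a, ha⟩
    refine ⟨-a, ?_⟩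
    have h : -u - ((-a : A) : B) * x ^ n = -(u - (a : B) * x ^ n) := by
      push_cast; noncomm_ring
    rw [h]; exact neg_mem ha

end hq


end RNSP

open RNSP AddSubgroup MulOpposite

/-- Let `B` be a ring, `A` a subring of `B`, and `x ∈ B` with
`[A,x]_q ⊆ A` in the sense that for every `a ∈ A` there are `a', a'' ∈ A` with
`a * x = x * a' + a''`.  If `A` is right Noetherian, `Ax + A = xA + A`, and
`B = Σ_{k ≥ 0} x^k A`, then `B` is right Noetherian. -/
theorem right_noetherian_of_subring_pow
    (B : Type*) [Ring B] (A : Subring B) (x : B)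
    (hq : ∀ a : A, ∃ a' a'' : A, (a : B) * x = x * (a' : B) + (a'' : B))
    (hNoeth : IsNoetherianRing (↥A)ᵐᵒᵖ)
    (hAx : AddSubgroup.closure {b : B | ∃ a a' : A, b = (a : B) * x + (a' : B)} =
           AddSubgroup.closure {b : B | ∃ a a' : A, b = x * (a : B) + (a' : B)})
    (hgen : AddSubgroup.closure {b : B | ∃ (a : A) (k : ℕ), b = x ^ k * (a : B)} = ⊤) :
    IsNoetherianRing Bᵐᵒᵖ := by
  classical
  -- derive `x * A ⊆ A * x + A`
  have hxA : ∀ a : A, ∃ a₁ a₂ : A, x * (a : B) = (a₁ : B) * x + (a₂ : B) := by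
    intro a
    have h1 : x * (a : B) ∈
        AddSubgroup.closure {b : B | ∃ a a' : A, b = x * (a : B) + (a' : B)} :=
      AddSubgroup.subset_closure ⟨a, 0, by simp⟩
    rw [← hAx] at h1
    let T : AddSubgroup B :=
      { carrier := {b : B | ∃ a a' : A, b = (a : B) * x + (a' : B)}
        zero_mem' := ⟨0, 0, by simp⟩
        add_mem' := by
          rintro u v ⟨a, a', rfl⟩ ⟨c, c', rfl⟩
          exact ⟨a + c, a' + c', by push_cast; noncomm_ring⟩
        neg_mem' := by
          rintro u ⟨a, a', rfl⟩
          exact ⟨-a, -a', by push_cast; noncomm_ring⟩ }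
    have h2 : AddSubgroup.closure {b : B | ∃ a a' : A, b = (a : B) * x + (a' : B)} ≤ T :=
      (AddSubgroup.closure_le T).mpr fun b hb => hb
    exact h2 h1
  haveI hN' : IsNoetherian (↥A)ᵐᵒᵖ (↥A)ᵐᵒᵖ := hNoeth
  rw [isNoetherianRing_iff, isNoetherian_def]
  intro I
  -- key computation for the twisted right-module structure
  have smul_key : ∀ (n : ℕ) (s c : A) (f : B), ((s : B) * x ^ n - f) ∈ C A x n →
      ∃ c' : A, (((s * c : A) : B) * x ^ n - f * (c' : B)) ∈ C A x n := by
    intro n s c f hf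
    obtain ⟨c', hc'⟩ := exists_straighten_left hq n c
    refine ⟨c', ?_⟩
    have h : ((s * c : A) : B) * x ^ n - f * (c' : B) =
        (s : B) * ((c : B) * x ^ n - x ^ n * (c' : B)) + ((s : B) * x ^ n - f) * (c' : B) := by
      push_cast; noncomm_ring
    rw [h]
    exact add_mem (A_mul_mem hq hc' s) (mul_A_mem hf c')
  -- the chain of leading-coefficient right ideals of `A`
  let J : ℕ → Ideal (↥A)ᵐᵒᵖ := fun n =>
    { carrier := {g | ∃ f : B, op f ∈ I ∧ (g.unop : B) * x ^ n - f ∈ C A x n}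
      add_mem' := by
        rintro g h ⟨f, hfI, hfC⟩ ⟨f', hf'I, hf'C⟩
        refine ⟨f + f', add_mem hfI hf'I, ?_⟩
        have he : ((g + h).unop : B) * x ^ n - (f + f') =
            ((g.unop : B) * x ^ n - f) + ((h.unop : B) * x ^ n - f') := by
          rw [unop_add]; push_cast; noncomm_ring
        rw [he]; exact add_mem hfC hf'C
      zero_mem' := ⟨0, zero_mem I, by simpa using zero_mem (C A x n)⟩
      smul_mem' := by
        rintro c g ⟨f, hfI, hfC⟩
        obtain ⟨c', hc'⟩ := smul_key n g.unop c.unop f hfC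
        refine ⟨f * (c' : B), ?_, ?_⟩
        · rw [op_mul]; exact Ideal.mul_mem_left I _ hfI
        · have he : (((c • g).unop : B)) = (((g.unop * c.unop : ↥A) : B)) := by
            rw [smul_eq_mul, unop_mul]
          rw [he]; exact hc' }
  have hJmem : ∀ (n : ℕ) (g : (↥A)ᵐᵒᵖ),
      g ∈ J n ↔ ∃ f : B, op f ∈ I ∧ (g.unop : B) * x ^ n - f ∈ C A x n := fun n g => Iff.rfl
  have Jmono : ∀ n, J n ≤ J (n + 1) := by
    intro n g hg
    obtain ⟨f, hfI, hfC⟩ := (hJmem n g).mp hg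
    refine (hJmem (n + 1) g).mpr ⟨f * x, ?_, ?_⟩
    · rw [op_mul]; exact Ideal.mul_mem_left I _ hfI
    · have he : (g.unop : B) * x ^ (n + 1) - f * x = ((g.unop : B) * x ^ n - f) * x := by
        rw [pow_succ]; noncomm_ring
      rw [he]; exact mul_x_mem hq hfC
  obtain ⟨N, hN⟩ := monotone_stabilizes_iff_noetherian.mpr hN'
    ⟨J, monotone_nat_of_le_succ Jmono⟩
  have hNJ : ∀ m, N ≤ m → J N = J m := by
    intro m hm
    have h := hN m hm
    simpa using h
  -- finite generating sets for the `J n`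
  have hfg : ∀ n, ∃ S : Finset (↥A)ᵐᵒᵖ, Submodule.span (↥A)ᵐᵒᵖ (↑S : Set (↥A)ᵐᵒᵖ) = J n :=
    fun n => IsNoetherian.noetherian (J n)
  choose G hG using hfg
  -- a choice of preimages in `I`
  have hex : ∀ p : ℕ × (↥A)ᵐᵒᵖ, ∃ f : B, p.2 ∈ J p.1 →
      (op f ∈ I ∧ (p.2.unop : B) * x ^ p.1 - f ∈ C A x p.1) := by
    intro p
    by_cases h : p.2 ∈ J p.1
    · obtain ⟨f, h1, h2⟩ := (hJmem p.1 p.2).mp h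
      exact ⟨f, fun _ => ⟨h1, h2⟩⟩
    · exact ⟨0, fun hc => absurd hc h⟩
  choose pick hpick using hex
  set Fop : Set Bᵐᵒᵖ := ⋃ n ∈ Set.Iic N, (fun s => op (pick (n, s))) '' ↑(G n) with hFop
  have hFopFin : Fop.Finite :=
    Set.Finite.biUnion (Set.finite_Iic N) fun n _ => ((G n).finite_toSet.image _)
  have hGJ : ∀ n, ∀ s ∈ G n, s ∈ J n := fun n s hs => (hG n) ▸ Submodule.subset_span hs
  have hFopI : Fop ⊆ ↑I := by
    rintro g hg
    simp only [hFop, Set.mem_iUnion, Set.mem_image] at hg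
    obtain ⟨n, hn, s, hs, rfl⟩ := hg
    exact (hpick (n, s) (hGJ n s hs)).1
  have hspanle : Submodule.span Bᵐᵒᵖ Fop ≤ I := Submodule.span_le.mpr hFopI
  -- the main induction on the filtration degree
  have main : ∀ n, ∀ b : B, op b ∈ I → b ∈ C A x n → op b ∈ Submodule.span Bᵐᵒᵖ Fop := by
    intro n
    induction n with
    | zero =>
      intro b hbI hbC
      rw [C_zero, AddSubgroup.mem_bot] at hbC
      subst hbC
      rw [op_zero]; exact zero_mem (Submodule.span Bᵐᵒᵖ Fop)
    | succ n ih =>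
      intro b hbI hbC
      obtain ⟨a, ha⟩ := exists_lead hq hxA hbC
      have haJ : op a ∈ J n := by
        refine (hJmem n (op a)).mpr ⟨b, hbI, ?_⟩
        have he : ((op a).unop : B) * x ^ n - b = -(b - (a : B) * x ^ n) := by
          rw [unop_op]; noncomm_ring
        rw [he]; exact neg_mem ha
      by_cases hn : n ≤ N
      · rw [← hG n] at haJ
        have key : ∃ f : B, op f ∈ Submodule.span Bᵐᵒᵖ Fop ∧
            ((op a).unop : B) * x ^ n - f ∈ C A x n := by
          refine Submodule.span_induction
            (p := fun s _ => ∃ f : B, op f ∈ Submodule.span Bᵐᵒᵖ Fop ∧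
              (s.unop : B) * x ^ n - f ∈ C A x n) ?_ ?_ ?_ ?_ haJ
          · intro s hsG
            refine ⟨pick (n, s), ?_, (hpick (n, s) (hGJ n s hsG)).2⟩
            refine Submodule.subset_span ?_
            simp only [hFop, Set.mem_iUnion, Set.mem_image]
            exact ⟨n, hn, s, hsG, rfl⟩
          · exact ⟨0, zero_mem _, by simpa using zero_mem (C A x n)⟩
          · rintro u v _ _ ⟨f, hf1, hf2⟩ ⟨f', hf1', hf2'⟩
            refine ⟨f + f', add_mem hf1 hf1', ?_⟩
            have he : ((u + v).unop : B) * x ^ n - (f + f') =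
                ((u.unop : B) * x ^ n - f) + ((v.unop : B) * x ^ n - f') := by
              rw [unop_add]; push_cast; noncomm_ring
            rw [he]; exact add_mem hf2 hf2'
          · rintro c u _ ⟨f, hf1, hf2⟩
            obtain ⟨c', hc'⟩ := smul_key n u.unop c.unop f hf2
            refine ⟨f * (c' : B), ?_, ?_⟩
            · rw [op_mul]; exact Ideal.mul_mem_left _ _ hf1
            · have he : (((c • u).unop : B)) = (((u.unop * c.unop : ↥A) : B)) := by
                rw [smul_eq_mul, unop_mul]
              rw [he]; exact hc'
        obtain ⟨f, hfspan, hfC⟩ := key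
        rw [unop_op] at hfC
        have h1 : b - f ∈ C A x n := by
          have h := add_mem ha hfC
          have he : (b - (a : B) * x ^ n) + ((a : B) * x ^ n - f) = b - f := by noncomm_ring
          rwa [he] at h
        have h2 : op (b - f) ∈ I := by
          rw [op_sub]; exact sub_mem hbI (hspanle hfspan)
        have h3 := ih (b - f) h2 h1
        have he : op b = op (b - f) + op f := by
          rw [← op_add]; congr 1; noncomm_ring
        rw [he]; exact add_mem h3 hfspan
      · push_neg at hn
        obtain ⟨m, rfl⟩ : ∃ m, n = m + 1 := ⟨n - 1, by omega⟩
        have hJeq : J (m + 1) = J m :=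
          (hNJ (m + 1) (by omega)).symm.trans (hNJ m (by omega))
        rw [hJeq] at haJ
        obtain ⟨f, hfI, hfC⟩ := (hJmem m (op a)).mp haJ
        rw [unop_op] at hfC
        have hfCm1 : f ∈ C A x (m + 1) := by
          have h1 : (a : B) * x ^ m ∈ C A x (m + 1) := A_mul_pow_mem hq m a
          have h2 := C_mono (Nat.le_succ m) hfC
          have he : f = (a : B) * x ^ m - ((a : B) * x ^ m - f) := by noncomm_ring
          rw [he]; exact sub_mem h1 h2
        have hfspan := ih f hfI hfCm1
        have hfxI : op (f * x) ∈ I := by rw [op_mul]; exact Ideal.mul_mem_left I _ hfI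
        have hfxspan : op (f * x) ∈ Submodule.span Bᵐᵒᵖ Fop := by
          rw [op_mul]; exact Ideal.mul_mem_left _ _ hfspan
        have hbfx : b - f * x ∈ C A x (m + 1) := by
          have h1 : ((a : B) * x ^ m - f) * x ∈ C A x (m + 1) := mul_x_mem hq hfC
          have he : b - f * x = (b - (a : B) * x ^ (m + 1)) + ((a : B) * x ^ m - f) * x := by
            rw [pow_succ]; noncomm_ring
          rw [he]; exact add_mem ha h1
        have hbfxI : op (b - f * x) ∈ I := by rw [op_sub]; exact sub_mem hbI hfxI
        have h3 := ih _ hbfxI hbfx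
        have he : op b = op (b - f * x) + op (f * x) := by
          rw [← op_add]; congr 1; noncomm_ring
        rw [he]; exact add_mem h3 hfxspan
  -- every element lies in some `C n`
  have hC_all : ∀ b : B, ∃ n, b ∈ C A x n := by
    intro b
    have hb : b ∈ AddSubgroup.closure {b : B | ∃ (a : A) (k : ℕ), b = x ^ k * (a : B)} := by
      rw [hgen]; trivial
    refine AddSubgroup.closure_induction (p := fun b _ => ∃ n, b ∈ C A x n) ?_ ?_ ?_ ?_ hb
    · rintro b ⟨a, k, rfl⟩; exact ⟨k + 1, mem_C_of a (Nat.lt_succ_self k)⟩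
    · exact ⟨0, zero_mem _⟩
    · rintro u v _ _ ⟨n, hn⟩ ⟨m, hm⟩
      exact ⟨max n m, add_mem (C_mono (le_max_left n m) hn) (C_mono (le_max_right n m) hm)⟩
    · rintro u _ ⟨n, hn⟩; exact ⟨n, neg_mem hn⟩
  have hIle : I ≤ Submodule.span Bᵐᵒᵖ Fop := by
    intro g hg
    obtain ⟨n, hn⟩ := hC_all g.unop
    have h := main n g.unop (by rwa [op_unop]) hn
    rwa [op_unop] at h
  exact Submodule.fg_def.mpr ⟨Fop, hFopFin, le_antisymm hspanle hIle⟩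
end

section
/- Let ī = (i_k)_{k∈K} be a sequence in the index set I of a finite simply-laced root system, and let a, k ∈ K satisfy a⁻ < k < a⁺, where a⁻ (resp. a⁺) is the largest index < a (resp. smallest index > a) with the same letter i_a (taken −∞/+∞ if none). Set w_{≤m} = s_{i_l}⋯s_{i_m} for a fixed l ≤ all relevant indices, and β_k = s_{i_l}⋯s_{i_{k-1}}(α_{i_k}). Then (β_k, w_{≤a⁻}ϖ_{i_a} + w_{≤a}ϖ_{i_a}) equals −(β_k, β_a) if a⁻ < k < a, equals (β_k, β_a) if a < k < a⁺, and equals 0 if k = a. (If a⁻ = −∞, interpret w_{≤a⁻}ϖ_{i_a} = ϖ_{i_a} acting by the prefix up to l−1, i.e. the identity.) -/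
noncomputable section

/-- The reflection `v ↦ v - B(v,a)·a` associated with a vector `a` (of squared length `2`)
and a symmetric bilinear form `B`. -/
def refl' {V : Type*} [AddCommGroup V] [Module ℝ V]
    (Bf : V →ₗ[ℝ] V →ₗ[ℝ] ℝ) (a : V) : Module.End ℝ V :=
  LinearMap.id - (Bf.flip a).smulRight a

/-- The list of integers `[l, l+1, …, k-1]` (empty if `k ≤ l`). -/
def iList (l k : ℤ) : List ℤ := (List.range (k - l).toNat).map (fun n => l + n)

/-- The product of reflections `s_{i_l} s_{i_{l+1}} ⋯ s_{i_{k-1}}`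
(applied as an endomorphism, `s_{i_{k-1}}` acting first). -/
def wprod {I V : Type*} [DecidableEq I] [AddCommGroup V] [Module ℝ V]
    (Bf : V →ₗ[ℝ] V →ₗ[ℝ] ℝ) (α : I → V) (ii : ℤ → I) (l k : ℤ) : Module.End ℝ V :=
  ((iList l k).map (fun m => refl' Bf (α (ii m)))).prod

/-- The root `β^ī_k = s_{i_l}⋯s_{i_{k-1}}(α_{i_k})`. -/
def betaRoot {I V : Type*} [DecidableEq I] [AddCommGroup V] [Module ℝ V]
    (Bf : V →ₗ[ℝ] V →ₗ[ℝ] ℝ) (α : I → V) (ii : ℤ → I) (l k : ℤ) : V :=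
  wprod Bf α ii l k (α (ii k))

/-! Write `x⁻ = w_{<a}ϖ_{i_a}`, `x⁺ = w_{≤a}ϖ_{i_a}`. Since `i_a` does not occur
strictly between `a⁻` and `a⁺`, the weight `ϖ_{i_a}` is fixed by those reflections, so
`w_{≤a⁻}ϖ_{i_a} = x⁻` and `x⁺ = w_{<a}(ϖ_{i_a} - α_{i_a}) = x⁻ - β_a`. By invariance of the form,
`(β_k, x⁻) = (α_{i_k}, ϖ_{i_a}) = 0` for `a⁻ < k < a`, `(β_k, x⁺) = (α_{i_k}, ϖ_{i_a}) = 0`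
for `a < k < a⁺`, and `(β_a, x⁻) = 1`, `(β_a, β_a) = 2`; the three cases follow. -/

theorem iList_eq_map_range (l k : ℤ) :
    iList l k = (List.range (k - l).toNat).map (fun n : ℕ => l + n) := by
  simp [iList, ← List.map_eq_flatMap]

theorem iList_of_le {l k : ℤ} (hkl : k ≤ l) : iList l k = [] := by
  simp [iList_eq_map_range, Int.toNat_of_nonpos (by omega : k - l ≤ 0)]

theorem iList_append {l m k : ℤ} (hlm : l ≤ m) (hmk : m ≤ k) :
    iList l k = iList l m ++ iList m k := by
  have hlen : (k - l).toNat = (m - l).toNat + (k - m).toNat := by omega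
  simp only [iList_eq_map_range, hlen, List.range_add, List.map_append, List.map_map]
  congr 1
  refine List.map_congr_left fun n _ => ?_
  simp only [Function.comp_apply, Nat.cast_add]
  omega

theorem iList_succ_self (k : ℤ) : iList k (k + 1) = [k] := by simp [iList_eq_map_range]

section Reflections

variable {V : Type*} [AddCommGroup V] [Module ℝ V] (Bf : V →ₗ[ℝ] V →ₗ[ℝ] ℝ)

theorem refl'_apply (a v : V) : refl' Bf a v = v - Bf v a • a := by
  simp [refl']

theorem refl'_apply_of_form_eq_zero {a v : V} (h : Bf v a = 0) : refl' Bf a v = v := by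
  rw [refl'_apply, h, zero_smul, sub_zero]

theorem refl'_isometry (hsymm : ∀ u v : V, Bf u v = Bf v u) {a : V} (ha : Bf a a = 2)
    (u v : V) : Bf (refl' Bf a u) (refl' Bf a v) = Bf u v := by
  simp only [refl'_apply, map_sub, map_smul, LinearMap.sub_apply, LinearMap.smul_apply,
    smul_eq_mul, ha, hsymm a v]
  ring

variable {I : Type*} [DecidableEq I] (α : I → V) (ii : ℤ → I)

theorem wprod_of_le {l k : ℤ} (hkl : k ≤ l) : wprod Bf α ii l k = 1 := by
  simp [wprod, iList_of_le hkl]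

theorem wprod_mul {l m k : ℤ} (hlm : l ≤ m) (hmk : m ≤ k) :
    wprod Bf α ii l k = wprod Bf α ii l m * wprod Bf α ii m k := by
  simp only [wprod, iList_append hlm hmk, List.map_append, List.prod_append]

theorem wprod_succ {l k : ℤ} (hlk : l ≤ k) :
    wprod Bf α ii l (k + 1) = wprod Bf α ii l k * refl' Bf (α (ii k)) := by
  rw [wprod_mul Bf α ii hlk (Int.le_add_one le_rfl)]
  simp [wprod, iList_succ_self]

theorem wprod_apply_of_form_eq_zero {l k : ℤ} {v : V}
    (hv : ∀ m, l ≤ m → m < k → Bf v (α (ii m)) = 0) : wprod Bf α ii l k v = v := by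
  rcases lt_or_ge k l with hkl | hlk
  · simp [wprod_of_le Bf α ii hkl.le]
  induction k, hlk using Int.leInduction with
  | base => simp [wprod_of_le Bf α ii le_rfl]
  | succ k hlk ih =>
    have hv' : ∀ m, l ≤ m → m < k → Bf v (α (ii m)) = 0 := fun m hlm hmk => hv m hlm (by omega)
    rw [wprod_succ Bf α ii hlk, Module.End.mul_apply,
      refl'_apply_of_form_eq_zero Bf (hv k hlk (by omega)), ih hv']

variable {α} (hsymm : ∀ u v : V, Bf u v = Bf v u) (hnorm : ∀ i, Bf (α i) (α i) = 2)
include hsymm hnorm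

theorem wprod_isometry (l k : ℤ) (u v : V) :
    Bf (wprod Bf α ii l k u) (wprod Bf α ii l k v) = Bf u v := by
  rcases lt_or_ge k l with hkl | hlk
  · simp [wprod_of_le Bf α ii hkl.le]
  induction k, hlk using Int.leInduction generalizing u v with
  | base => simp [wprod_of_le Bf α ii le_rfl]
  | succ k hlk ih =>
    rw [wprod_succ Bf α ii hlk, Module.End.mul_apply, Module.End.mul_apply, ih,
      refl'_isometry Bf hsymm (hnorm _)]

theorem form_betaRoot_self (l k : ℤ) : Bf (betaRoot Bf α ii l k) (betaRoot Bf α ii l k) = 2 := by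
  rw [betaRoot, wprod_isometry Bf ii hsymm hnorm, hnorm]

theorem form_betaRoot_wprod_of_le {l k q : ℤ} (hlk : l ≤ k) (hkq : k ≤ q) (y : V) :
    Bf (betaRoot Bf α ii l k) (wprod Bf α ii l q y) = Bf (α (ii k)) (wprod Bf α ii k q y) := by
  rw [betaRoot, wprod_mul Bf α ii hlk hkq, Module.End.mul_apply, wprod_isometry Bf ii hsymm hnorm]

theorem form_betaRoot_wprod_of_ge {l q k : ℤ} (hlq : l ≤ q) (hqk : q ≤ k) {y : V}
    (hy : wprod Bf α ii q k y = y) :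
    Bf (betaRoot Bf α ii l k) (wprod Bf α ii l q y) = Bf (α (ii k)) y := by
  conv_lhs => rw [← hy]
  rw [betaRoot, ← Module.End.mul_apply, ← wprod_mul Bf α ii hlq hqk,
    wprod_isometry Bf ii hsymm hnorm]

end Reflections

section Weights

variable {I V : Type*} [DecidableEq I] [AddCommGroup V] [Module ℝ V]
  (Bf : V →ₗ[ℝ] V →ₗ[ℝ] ℝ) (hsymm : ∀ u v : V, Bf u v = Bf v u)
  {α : I → V} {ϖ : I → V} (hϖ : ∀ i j : I, Bf (α j) (ϖ i) = if i = j then 1 else 0)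
  (ii : ℤ → I)
include hsymm hϖ

theorem refl'_weight_self (i : I) : refl' Bf (α i) (ϖ i) = ϖ i - α i := by
  rw [refl'_apply, hsymm, hϖ, if_pos rfl, one_smul]

theorem wprod_weight_of_forall_ne {i : I} {p q : ℤ} (h : ∀ m, p ≤ m → m < q → ii m ≠ i) :
    wprod Bf α ii p q (ϖ i) = ϖ i :=
  wprod_apply_of_form_eq_zero Bf α ii fun m hpm hmq => by
    rw [hsymm, hϖ, if_neg (h m hpm hmq).symm]

theorem wprod_weight_eq_of_forall_ne {i : I} {l p q : ℤ} (hlp : l ≤ p) (hpq : p ≤ q)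
    (h : ∀ m, p ≤ m → m < q → ii m ≠ i) : wprod Bf α ii l q (ϖ i) = wprod Bf α ii l p (ϖ i) := by
  rw [wprod_mul Bf α ii hlp hpq, Module.End.mul_apply,
    wprod_weight_of_forall_ne Bf hsymm hϖ ii h]

theorem wprod_weight_succ {l a : ℤ} (hla : l ≤ a) :
    wprod Bf α ii l (a + 1) (ϖ (ii a)) = wprod Bf α ii l a (ϖ (ii a)) - betaRoot Bf α ii l a := by
  rw [wprod_succ Bf α ii hla, Module.End.mul_apply, refl'_weight_self Bf hsymm hϖ, map_sub,
    betaRoot]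

end Weights

/-- With `w_{≤m} = s_{i_l}⋯s_{i_m}` and `β_k = s_{i_l}⋯s_{i_{k-1}}(α_{i_k})`,
for `a⁻ < k < a⁺` (where `a⁻`, `a⁺` are the previous/next occurrence of the letter `i_a`,
interpreted as `l-1` resp. arbitrarily large if none) one has
`(β_k, w_{≤a⁻}ϖ_{i_a} + w_{≤a}ϖ_{i_a}) = −(β_k, β_a)` if `k < a`, `(β_k, β_a)` if `a < k`,
and `0` if `k = a`. -/
theorem beta_pairing_with_weights
    {I V : Type*} [DecidableEq I] [AddCommGroup V] [Module ℝ V]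
    (Bf : V →ₗ[ℝ] V →ₗ[ℝ] ℝ)
    (hsymm : ∀ u v : V, Bf u v = Bf v u)
    (α : I → V) (hnorm : ∀ i, Bf (α i) (α i) = 2)
    (ϖ : I → V) (hϖ : ∀ i j : I, Bf (α j) (ϖ i) = if i = j then 1 else 0)
    (ii : ℤ → I) (l : ℤ) :
    ∀ a k aminus aplus : ℤ,
      l ≤ a → l ≤ k →
      l - 1 ≤ aminus → aminus < a →
      (aminus = l - 1 ∨ ii aminus = ii a) →
      (∀ m : ℤ, aminus < m → m < a → ii m ≠ ii a) →
      a < aplus →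
      (∀ m : ℤ, a < m → m < aplus → ii m ≠ ii a) →
      aminus < k → k < aplus →
      Bf (betaRoot Bf α ii l k)
        (wprod Bf α ii l (aminus + 1) (ϖ (ii a)) + wprod Bf α ii l (a + 1) (ϖ (ii a)))
      = if k < a then -(Bf (betaRoot Bf α ii l k) (betaRoot Bf α ii l a))
        else if a < k then Bf (betaRoot Bf α ii l k) (betaRoot Bf α ii l a)
        else 0 := by
  intro a k aminus aplus hla hlk hlaminus haminus _ hbefore haplus hafter hkminus hkplus
  set x := wprod Bf α ii l a (ϖ (ii a))
  rw [← wprod_weight_eq_of_forall_ne Bf hsymm hϖ ii (p := aminus + 1) (by omega) haminus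
      fun m hm hma => hbefore m (by omega) hma, wprod_weight_succ Bf hsymm hϖ ii hla]
  rcases lt_trichotomy k a with h | rfl | h
  · have hx : Bf (betaRoot Bf α ii l k) x = 0 := by
      rw [form_betaRoot_wprod_of_le Bf ii hsymm hnorm hlk h.le,
        wprod_weight_of_forall_ne Bf hsymm hϖ ii fun m hkm hma => hbefore m (by omega) hma,
        hϖ, if_neg (hbefore k hkminus h).symm]
    rw [map_add, map_sub, hx, if_pos h]
    ring
  · have hx : Bf (betaRoot Bf α ii l k) x = 1 := by
      rw [form_betaRoot_wprod_of_le Bf ii hsymm hnorm hlk le_rfl, wprod_of_le Bf α ii le_rfl,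
        Module.End.one_apply, hϖ, if_pos rfl]
    rw [map_add, map_sub, hx, form_betaRoot_self Bf ii hsymm hnorm]
    norm_num
  · have hx : Bf (betaRoot Bf α ii l k) (x - betaRoot Bf α ii l a) = 0 := by
      rw [← wprod_weight_succ Bf hsymm hϖ ii hla, form_betaRoot_wprod_of_ge Bf ii hsymm hnorm
        (by omega) (by omega) (wprod_weight_of_forall_ne Bf hsymm hϖ ii
          fun m ham hmk => hafter m (by omega) (by omega)), hϖ, if_neg (hafter k h hkplus).symm]
    rw [map_sub] at hx
    rw [map_add, map_sub, if_neg (not_lt.mpr h.le), if_pos h]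
    linarith

end
end

section
/- Let ī = (i_k)_{1≤k≤r} be a finite sequence in I. Two i-boxes [a₁,b₁] and [a₂,b₂] in an admissible chain of i-boxes commute; that is, if 𝔠 = (𝔠_k)_{1≤k≤l} is an admissible chain of i-boxes, then for all j, k, either a_j⁻ < a_k ≤ b_k < b_j⁺ or a_k⁻ < a_j ≤ b_j < b_k⁺, where 𝔠_j = [a_j,b_j]. -/
/-- Two `i`-boxes `[a₁,b₁]`, `[a₂,b₂]` for the sequence `ī` *commute*:
`a₁⁻ < a₂ ≤ b₂ < b₁⁺` or `a₂⁻ < a₁ ≤ b₁ < b₂⁺`, where `a⁻` (resp. `b⁺`) is the previous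
(resp. next) occurrence of the same letter. -/
def IBoxCommute {I : Type*} (ii : ℤ → I) (a₁ b₁ a₂ b₂ : ℤ) : Prop :=
  (a₂ ≤ b₂ ∧ (∀ t : ℤ, a₂ ≤ t → t < a₁ → ii t ≠ ii a₁) ∧
    (∀ t : ℤ, b₁ < t → t ≤ b₂ → ii t ≠ ii b₁)) ∨
  (a₁ ≤ b₁ ∧ (∀ t : ℤ, a₁ ≤ t → t < a₂ → ii t ≠ ii a₂) ∧
    (∀ t : ℤ, b₂ < t → t ≤ b₁ → ii t ≠ ii b₂))

/-- An admissible chain of `i`-boxes `(𝔠_k = [a k, b k])_{1 ≤ k ≤ l}` for a sequence `ī`,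
with envelopes `𝔠̃_k = [ea k, eb k]`: the envelopes grow one step at a time (to the left or
to the right), each box is an `i`-box of the form `[ã_k, b̃_k(i_{ã_k})⁻]` or
`[ã_k(i_{b̃_k})⁺, b̃_k]`, and each box contains the newly added point of the envelope
(so that `|𝔠̃_k| = k`). -/
structure AdmissibleChain (I : Type*) (ii : ℤ → I) (l : ℕ) where
  a : ℕ → ℤ
  b : ℕ → ℤ
  ea : ℕ → ℤ
  eb : ℕ → ℤ
  base_a : ea 1 = a 1
  base_b : eb 1 = b 1
  base_eq : a 1 = b 1
  env_step : ∀ k : ℕ, 2 ≤ k → k ≤ l →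
    (ea k = ea (k - 1) - 1 ∧ eb k = eb (k - 1)) ∨
    (ea k = ea (k - 1) ∧ eb k = eb (k - 1) + 1)
  cover_left : ∀ k : ℕ, 2 ≤ k → k ≤ l → ea k = ea (k - 1) - 1 → a k = ea k
  cover_right : ∀ k : ℕ, 2 ≤ k → k ≤ l → eb k = eb (k - 1) + 1 → b k = eb k
  box : ∀ k : ℕ, 1 ≤ k → k ≤ l →
    (a k = ea k ∧ a k ≤ b k ∧ b k ≤ eb k ∧ ii (b k) = ii (a k) ∧
      (∀ t : ℤ, b k < t → t ≤ eb k → ii t ≠ ii (a k))) ∨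
    (b k = eb k ∧ ea k ≤ a k ∧ a k ≤ b k ∧ ii (a k) = ii (b k) ∧
      (∀ t : ℤ, ea k ≤ t → t < a k → ii t ≠ ii (b k)))

/-- Any two `i`-boxes belonging to an admissible chain of `i`-boxes
commute. -/
theorem admissibleChain_boxes_commute
    {I : Type*} (ii : ℤ → I) (l : ℕ) (C : AdmissibleChain I ii l) :
    ∀ j k : ℕ, 1 ≤ j → j ≤ l → 1 ≤ k → k ≤ l →
      IBoxCommute ii (C.a j) (C.b j) (C.a k) (C.b k) := by
  have mono : ∀ m n : ℕ, 1 ≤ m → m ≤ n → n ≤ l →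
      C.ea n ≤ C.ea m ∧ C.eb m ≤ C.eb n := by
    intro m n hm hmn hnl
    induction n, hmn using Nat.le_induction with
    | base => exact ⟨le_rfl, le_rfl⟩
    | succ n hmn ih =>
      have h1 : n ≤ l := le_trans (Nat.le_succ n) hnl
      have ih' := ih h1
      have hstep := C.env_step (n + 1) (by omega) hnl
      simp only [Nat.add_sub_cancel] at hstep
      rcases hstep with ⟨h3, h4⟩ | ⟨h3, h4⟩ <;> exact ⟨by omega, by omega⟩
  have bounds : ∀ m : ℕ, 1 ≤ m → m ≤ l →
      C.ea m ≤ C.a m ∧ C.a m ≤ C.b m ∧ C.b m ≤ C.eb m := by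
    intro m h1 h2
    rcases C.box m h1 h2 with ⟨h3, h4, h5, _⟩ | ⟨h3, h4, h5, _⟩ <;>
      exact ⟨by omega, by omega, by omega⟩
  have key : ∀ j k : ℕ, 1 ≤ j → j ≤ l → 1 ≤ k → k ≤ l → j ≤ k →
      (C.a j ≤ C.b j ∧ (∀ t : ℤ, C.a j ≤ t → t < C.a k → ii t ≠ ii (C.a k)) ∧
        (∀ t : ℤ, C.b k < t → t ≤ C.b j → ii t ≠ ii (C.b k))) := by
    intro j k hj hjl hk hkl hjk
    obtain ⟨hea, heb⟩ := mono j k hj hjk hkl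
    obtain ⟨hj1, hj2, hj3⟩ := bounds j hj hjl
    refine ⟨hj2, ?_, ?_⟩
    · rcases C.box k hk hkl with ⟨h3, h4, h5, h6, h7⟩ | ⟨h3, h4, h5, h6, h7⟩
      · intro t ht1 ht2; exfalso; omega
      · intro t ht1 ht2; rw [h6]; exact h7 t (by omega) ht2
    · rcases C.box k hk hkl with ⟨h3, h4, h5, h6, h7⟩ | ⟨h3, h4, h5, h6, h7⟩
      · intro t ht1 ht2; rw [h6]; exact h7 t ht1 (by omega)
      · intro t ht1 ht2; exfalso; omega
  intro j k hj hjl hk hkl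
  rcases le_total j k with h | h
  · exact Or.inr (key j k hj hjl hk hkl h)
  · exact Or.inl (key k j hk hkl hj hjl h)
end

section
/- Let 𝔠 = (𝔠_k)_{1≤k≤l} be an admissible chain of i-boxes for a sequence ī with range 𝔠̃_l. If an i-box 𝔠 ⊆ 𝔠̃_l commutes with every member 𝔠_j of the chain (1 ≤ j ≤ l), then 𝔠 is itself a member of the chain. -/
section Aux

variable {I : Type*}

lemma AdmissibleChain.basic {ii : ℤ → I} {l : ℕ} (C : AdmissibleChain I ii l)
    (m : ℕ) (h1 : 1 ≤ m) (h2 : m ≤ l) :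
    C.ea m ≤ C.a m ∧ C.a m ≤ C.b m ∧ C.b m ≤ C.eb m ∧ ii (C.a m) = ii (C.b m) := by
  rcases C.box m h1 h2 with ⟨h, hab, hbe, hi, _⟩ | ⟨h, hea, hab, hi, _⟩
  · exact ⟨h.ge, hab, hbe, hi.symm⟩
  · exact ⟨hea, hab, h.le, hi⟩

lemma AdmissibleChain.env_mono {ii : ℤ → I} {l : ℕ} (C : AdmissibleChain I ii l) :
    ∀ k, k ≤ l → ∀ m, 1 ≤ m → m ≤ k → C.ea k ≤ C.ea m ∧ C.eb m ≤ C.eb k := by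
  intro k
  induction k with
  | zero => intro _ m h1 h2; omega
  | succ n ih =>
    intro hk m h1 h2
    rcases Nat.eq_or_lt_of_le h2 with h | h
    · subst h; exact ⟨le_rfl, le_rfl⟩
    · have hm : m ≤ n := by omega
      have hstep := C.env_step (n+1) (by omega) hk
      simp only [Nat.add_sub_cancel] at hstep
      obtain ⟨ha, hb⟩ := ih (by omega) m h1 hm
      rcases hstep with ⟨e1, e2⟩ | ⟨e1, e2⟩ <;> exact ⟨by omega, by omega⟩

lemma AdmissibleChain.point {ii : ℤ → I} {l : ℕ} (C : AdmissibleChain I ii l) :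
    ∀ k, 1 ≤ k → k ≤ l → ∀ p : ℤ, C.ea k ≤ p → p ≤ C.eb k →
      ∃ m, 1 ≤ m ∧ m ≤ k ∧ (C.a m = p ∨ C.b m = p) := by
  intro k
  induction k with
  | zero => intro h1; omega
  | succ n ih =>
    intro h1 h2 p hp1 hp2
    by_cases hn : n = 0
    · subst hn
      have hba := C.base_a
      have hbb := C.base_b
      have hbe := C.base_eq
      simp only [Nat.zero_add] at hp1 hp2
      exact ⟨1, le_rfl, by omega, Or.inl (by omega)⟩
    · have hn1 : 1 ≤ n := Nat.one_le_iff_ne_zero.mpr hn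
      rcases C.env_step (n+1) (by omega) h2 with ⟨e1, e2⟩ | ⟨e1, e2⟩
      · have e1' := e1; have e2' := e2
        simp only [Nat.add_sub_cancel] at e1' e2'
        by_cases hp : C.ea n ≤ p
        · obtain ⟨m, hm1, hm2, hm3⟩ := ih hn1 (by omega) p hp (by omega)
          exact ⟨m, hm1, by omega, hm3⟩
        · have hc := C.cover_left (n+1) (by omega) h2 e1
          exact ⟨n+1, by omega, le_rfl, Or.inl (by omega)⟩
      · have e1' := e1; have e2' := e2
        simp only [Nat.add_sub_cancel] at e1' e2'
        by_cases hp : p ≤ C.eb n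
        · obtain ⟨m, hm1, hm2, hm3⟩ := ih hn1 (by omega) p (by omega) hp
          exact ⟨m, hm1, by omega, hm3⟩
        · have hc := C.cover_right (n+1) (by omega) h2 e2
          exact ⟨n+1, by omega, le_rfl, Or.inr (by omega)⟩

lemma commute_c1 (ii : ℤ → I) (x y A B z : ℤ) (hxy : x ≤ y)
    (hxyi : ii x = ii y) (hAB : ii A = ii B)
    (hc : IBoxCommute ii x y A B) (hz : ii z = ii y) (hyz : y < z)
    (hcase : A = z ∨ (B = z ∧ x < A)) : False := by
  rcases hc with ⟨hab, _, htail⟩ | ⟨_, hhead, _⟩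
  · rcases hcase with hAz | ⟨hBz, _⟩
    · exact htail z hyz (by omega) hz
    · exact htail z hyz (by omega) hz
  · rcases hcase with hAz | ⟨hBz, hxA⟩
    · exact hhead y hxy (by omega) (by rw [hAz]; exact hz.symm)
    · exact hhead x le_rfl hxA (by rw [hAB, hBz, hz]; exact hxyi)

lemma commute_c2 (ii : ℤ → I) (x y A B z : ℤ) (hxy : x ≤ y)
    (hxyi : ii x = ii y) (hAB : ii A = ii B)
    (hc : IBoxCommute ii x y A B) (hz : ii z = ii x) (hzx : z < x)
    (hcase : B = z ∨ (A = z ∧ B < y)) : False := by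
  rcases hc with ⟨hab, hhead, _⟩ | ⟨_, _, htail⟩
  · rcases hcase with hBz | ⟨hAz, _⟩
    · exact hhead z (by omega) hzx hz
    · exact hhead z (by omega) hzx hz
  · rcases hcase with hBz | ⟨hAz, hBy⟩
    · exact htail y (by omega) le_rfl (by rw [hBz]; exact (hz.trans hxyi).symm)
    · exact htail y hBy le_rfl (by rw [← hAB, hAz, hz]; exact hxyi.symm)

end Aux

private def AdmissibleChain.restrict {I : Type*} {ii : ℤ → I} {n : ℕ}
    (C : AdmissibleChain I ii (n + 1)) : AdmissibleChain I ii n where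
  a := C.a
  b := C.b
  ea := C.ea
  eb := C.eb
  base_a := C.base_a
  base_b := C.base_b
  base_eq := C.base_eq
  env_step := fun k h1 h2 => C.env_step k h1 (h2.trans (Nat.le_succ n))
  cover_left := fun k h1 h2 => C.cover_left k h1 (h2.trans (Nat.le_succ n))
  cover_right := fun k h1 h2 => C.cover_right k h1 (h2.trans (Nat.le_succ n))
  box := fun k h1 h2 => C.box k h1 (h2.trans (Nat.le_succ n))

private lemma admissibleChain_mem_aux {I : Type*} (ii : ℤ → I) :
    ∀ l : ℕ, 1 ≤ l → ∀ (C : AdmissibleChain I ii l) (x y : ℤ), x ≤ y → ii x = ii y →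
      C.ea l ≤ x → y ≤ C.eb l →
      (∀ j : ℕ, 1 ≤ j → j ≤ l → IBoxCommute ii x y (C.a j) (C.b j)) →
      ∃ j : ℕ, 1 ≤ j ∧ j ≤ l ∧ C.a j = x ∧ C.b j = y := by
  intro l hl
  induction l, hl using Nat.le_induction with
  | base =>
    intro C x y hxy hbox hr1 hr2 hcomm
    have hba := C.base_a
    have hbb := C.base_b
    have hbe := C.base_eq
    exact ⟨1, le_rfl, le_rfl, by omega, by omega⟩
  | succ n hn ih =>
    intro C x y hxy hbox hr1 hr2 hcomm
    have hstep := C.env_step (n+1) (by omega) le_rfl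
    obtain ⟨hbl1, hbl2, hbl3, hbl4⟩ := C.basic (n+1) (by omega) le_rfl
    rcases hstep with ⟨e1, e2⟩ | ⟨e1, e2⟩
    · -- left growth step
      have e1' := e1; have e2' := e2
      simp only [Nat.add_sub_cancel] at e1' e2'
      by_cases hx : C.ea n ≤ x
      · obtain ⟨j, hj1, hj2, hj3, hj4⟩ :=
          ih C.restrict x y hxy hbox hx (by show y ≤ C.eb n; omega)
            (fun j h1 h2 => hcomm j h1 (by omega))
        exact ⟨j, hj1, by omega, hj3, hj4⟩
      · have hal : C.a (n+1) = x := by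
          have := C.cover_left (n+1) (by omega) le_rfl e1
          omega
        have hib : ii (C.b (n+1)) = ii x := by rw [← hal]; exact hbl4.symm
        -- y ≤ b (n+1)
        have hyb : y ≤ C.b (n+1) := by
          rcases C.box (n+1) (by omega) le_rfl with ⟨_, _, _, _, htail⟩ | ⟨hbe2, _, _, _, _⟩
          · by_contra h
            push_neg at h
            exact htail y h hr2 (by rw [hal]; exact hbox.symm)
          · omega
        -- b (n+1) ≤ y
        have hby : C.b (n+1) ≤ y := by
          by_contra h
          push_neg at h
          have hiz : ii (C.b (n+1)) = ii y := by rw [hib]; exact hbox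
          obtain ⟨m, hm1, hm2, hm3⟩ := C.point n hn (by omega) (C.b (n+1))
            (by omega) (by omega)
          obtain ⟨hbm1, hbm2, hbm3, hbm4⟩ := C.basic m hm1 (by omega)
          obtain ⟨hmo1, hmo2⟩ := C.env_mono n (by omega) m hm1 hm2
          rcases hm3 with hAz | hBz
          · exact commute_c1 ii x y (C.a m) (C.b m) (C.b (n+1)) hxy hbox hbm4
              (hcomm m hm1 (by omega)) hiz h (Or.inl hAz)
          · exact commute_c1 ii x y (C.a m) (C.b m) (C.b (n+1)) hxy hbox hbm4
              (hcomm m hm1 (by omega)) hiz h (Or.inr ⟨hBz, by omega⟩)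
        exact ⟨n+1, by omega, le_rfl, hal, by omega⟩
    · -- right growth step
      have e1' := e1; have e2' := e2
      simp only [Nat.add_sub_cancel] at e1' e2'
      by_cases hy : y ≤ C.eb n
      · obtain ⟨j, hj1, hj2, hj3, hj4⟩ :=
          ih C.restrict x y hxy hbox (by show C.ea n ≤ x; omega) hy
            (fun j h1 h2 => hcomm j h1 (by omega))
        exact ⟨j, hj1, by omega, hj3, hj4⟩
      · have hbl : C.b (n+1) = y := by
          have := C.cover_right (n+1) (by omega) le_rfl e2
          omega
        have hia : ii (C.a (n+1)) = ii x := by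
          rw [hbl4, hbl]; exact hbox.symm
        -- a (n+1) ≤ x
        have hax : C.a (n+1) ≤ x := by
          rcases C.box (n+1) (by omega) le_rfl with ⟨hae, _, _, _, _⟩ | ⟨_, _, _, _, hhead⟩
          · omega
          · by_contra h
            push_neg at h
            exact hhead x hr1 h (by rw [hbl]; exact hbox)
        -- x ≤ a (n+1)
        have hxa : x ≤ C.a (n+1) := by
          by_contra h
          push_neg at h
          have hiz : ii (C.a (n+1)) = ii x := hia
          obtain ⟨m, hm1, hm2, hm3⟩ := C.point n hn (by omega) (C.a (n+1))
            (by omega) (by omega)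
          obtain ⟨hbm1, hbm2, hbm3, hbm4⟩ := C.basic m hm1 (by omega)
          obtain ⟨hmo1, hmo2⟩ := C.env_mono n (by omega) m hm1 hm2
          rcases hm3 with hAz | hBz
          · exact commute_c2 ii x y (C.a m) (C.b m) (C.a (n+1)) hxy hbox hbm4
              (hcomm m hm1 (by omega)) hiz h (Or.inr ⟨hAz, by omega⟩)
          · exact commute_c2 ii x y (C.a m) (C.b m) (C.a (n+1)) hxy hbox hbm4
              (hcomm m hm1 (by omega)) hiz h (Or.inl hBz)
        exact ⟨n+1, by omega, le_rfl, by omega, hbl⟩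

/-- If an `i`-box `[x,y]` contained in the range of an admissible chain of
`i`-boxes commutes with every member of the chain, then it is itself a member of the
chain. -/
theorem admissibleChain_mem_of_commute
    {I : Type*} (ii : ℤ → I) (l : ℕ) (hl : 1 ≤ l) (C : AdmissibleChain I ii l)
    (x y : ℤ) (hxy : x ≤ y) (hbox : ii x = ii y)
    (hrange₁ : C.ea l ≤ x) (hrange₂ : y ≤ C.eb l)
    (hcomm : ∀ j : ℕ, 1 ≤ j → j ≤ l → IBoxCommute ii x y (C.a j) (C.b j)) :
    ∃ j : ℕ, 1 ≤ j ∧ j ≤ l ∧ C.a j = x ∧ C.b j = y := by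
  exact admissibleChain_mem_aux ii l hl C x y hxy hbox hrange₁ hrange₂ hcomm
end

section
/- An admissible chain of i-boxes (𝔠_k)_{1≤k≤l} with given range is uniquely determined by the initial point c = a₁ = b₁ together with the sequence 𝔥 = (𝓗₁,…,𝓗_{l−1}) ∈ {𝓛,𝓡}^{l−1} of horizontal moves, where 𝓗_{k−1} = 𝓛 means ã_k = ã_{k−1} − 1, b̃_k = b̃_{k−1} and 𝔠_k = [ã_k, b̃_k(i_{ã_k})⁻], and 𝓗_{k−1} = 𝓡 means b̃_k = b̃_{k−1} + 1, ã_k = ã_{k−1} and 𝔠_k = [ã_k(i_{b̃_k})⁺, b̃_k]. Conversely every such pair (c, 𝔥) with the resulting intervals inside the ambient range determines an admissible chain. -/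
open Classical in
/-- Largest `t ∈ [lo, hi]` with `ii t = ii lo`. -/
noncomputable def bMax {I : Type*} (ii : ℤ → I) (lo hi : ℤ) : ℤ :=
  if h : lo ≤ hi then
    ((Finset.Icc lo hi).filter (fun t => ii t = ii lo)).max'
      ⟨lo, by simp [Finset.mem_filter, h]⟩
  else lo

open Classical in
/-- Smallest `t ∈ [lo, hi]` with `ii t = ii hi`. -/
noncomputable def aMin {I : Type*} (ii : ℤ → I) (lo hi : ℤ) : ℤ :=
  if h : lo ≤ hi then
    ((Finset.Icc lo hi).filter (fun t => ii t = ii hi)).min'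
      ⟨hi, by simp [Finset.mem_filter, h]⟩
  else hi

lemma bMax_spec {I : Type*} (ii : ℤ → I) (lo hi : ℤ) (h : lo ≤ hi) :
    lo ≤ bMax ii lo hi ∧ bMax ii lo hi ≤ hi ∧ ii (bMax ii lo hi) = ii lo ∧
      ∀ t : ℤ, bMax ii lo hi < t → t ≤ hi → ii t ≠ ii lo := by
  classical
  rw [bMax, dif_pos h]
  have hmem := Finset.max'_mem ((Finset.Icc lo hi).filter (fun t => ii t = ii lo))
    ⟨lo, by simp [Finset.mem_filter, h]⟩
  simp only [Finset.mem_filter, Finset.mem_Icc] at hmem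
  refine ⟨hmem.1.1, hmem.1.2, hmem.2, ?_⟩
  intro t ht1 ht2 ht3
  have hmemt : t ∈ (Finset.Icc lo hi).filter (fun t => ii t = ii lo) := by
    rw [Finset.mem_filter, Finset.mem_Icc]
    exact ⟨⟨le_trans hmem.1.1 (le_of_lt ht1), ht2⟩, ht3⟩
  exact absurd (Finset.le_max' _ t hmemt) (not_le.mpr ht1)

lemma aMin_spec {I : Type*} (ii : ℤ → I) (lo hi : ℤ) (h : lo ≤ hi) :
    lo ≤ aMin ii lo hi ∧ aMin ii lo hi ≤ hi ∧ ii (aMin ii lo hi) = ii hi ∧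
      ∀ t : ℤ, lo ≤ t → t < aMin ii lo hi → ii t ≠ ii hi := by
  classical
  rw [aMin, dif_pos h]
  have hmem := Finset.min'_mem ((Finset.Icc lo hi).filter (fun t => ii t = ii hi))
    ⟨hi, by simp [Finset.mem_filter, h]⟩
  simp only [Finset.mem_filter, Finset.mem_Icc] at hmem
  refine ⟨hmem.1.1, hmem.1.2, hmem.2, ?_⟩
  intro t ht1 ht2 ht3
  have hmemt : t ∈ (Finset.Icc lo hi).filter (fun t => ii t = ii hi) := by
    rw [Finset.mem_filter, Finset.mem_Icc]
    exact ⟨⟨ht1, le_trans (le_of_lt ht2) hmem.1.2⟩, ht3⟩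
  exact absurd (Finset.min'_le _ t hmemt) (not_le.mpr ht2)

lemma maxUnique {I : Type*} {ii : ℤ → I} {X : I} {E b b' : ℤ}
    (hb : b ≤ E) (hX : ii b = X) (hmax : ∀ t : ℤ, b < t → t ≤ E → ii t ≠ X)
    (hb' : b' ≤ E) (hX' : ii b' = X) (hmax' : ∀ t : ℤ, b' < t → t ≤ E → ii t ≠ X) :
    b = b' := by
  rcases lt_trichotomy b b' with h | h | h
  · exact absurd hX' (hmax b' h hb')
  · exact h
  · exact absurd hX (hmax' b h hb)

lemma minUnique {I : Type*} {ii : ℤ → I} {X : I} {L a a' : ℤ}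
    (hb : L ≤ a) (hX : ii a = X) (hmin : ∀ t : ℤ, L ≤ t → t < a → ii t ≠ X)
    (hb' : L ≤ a') (hX' : ii a' = X) (hmin' : ∀ t : ℤ, L ≤ t → t < a' → ii t ≠ X) :
    a = a' := by
  rcases lt_trichotomy a a' with h | h | h
  · exact absurd hX (hmin' a hb h)
  · exact h
  · exact absurd hX' (hmin a' hb' h)

/-- The box attached at step `k ≥ 2` has the form dictated by the `k`-th horizontal move. -/
lemma boxForm {I : Type*} (ii : ℤ → I) {l : ℕ} (C : AdmissibleChain I ii l)
    (k : ℕ) (h2 : 2 ≤ k) (hl : k ≤ l) :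
    (C.ea k = C.ea (k - 1) - 1 →
      C.a k = C.ea k ∧ C.b k ≤ C.eb k ∧ ii (C.b k) = ii (C.ea k) ∧
      (∀ t : ℤ, C.b k < t → t ≤ C.eb k → ii t ≠ ii (C.ea k))) ∧
    (C.eb k = C.eb (k - 1) + 1 →
      C.b k = C.eb k ∧ C.ea k ≤ C.a k ∧ ii (C.a k) = ii (C.eb k) ∧
      (∀ t : ℤ, C.ea k ≤ t → t < C.a k → ii t ≠ ii (C.eb k))) := by
  constructor
  · intro hL
    have ha := C.cover_left k h2 hl hL
    rcases C.box k (by omega) hl with ⟨h1, hab, hbe, hii, hmax⟩ | ⟨hb, hea, hab, hii, hmin⟩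
    · refine ⟨ha, hbe, by rw [hii, h1], ?_⟩
      intro t ht1 ht2
      rw [← h1]
      exact hmax t ht1 ht2
    · refine ⟨ha, le_of_eq hb, ?_, ?_⟩
      · rw [← hii, ha]
      · intro t ht1 ht2
        exfalso; omega
  · intro hR
    have hb := C.cover_right k h2 hl hR
    rcases C.box k (by omega) hl with ⟨h1, hab, hbe, hii, hmax⟩ | ⟨hb', hea, hab, hii, hmin⟩
    · refine ⟨hb, le_of_eq h1.symm, by rw [← hii, hb], ?_⟩
      intro t ht1 ht2
      exfalso; omega
    · refine ⟨hb, hea, by rw [hii, hb], ?_⟩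
      intro t ht1 ht2
      rw [← hb]
      exact hmin t ht1 ht2

def chEA (c : ℤ) (h : ℕ → Bool) : ℕ → ℤ
  | 0 => c
  | 1 => c
  | (k+2) => if h (k+2) then chEA c h (k+1) - 1 else chEA c h (k+1)

def chEB (c : ℤ) (h : ℕ → Bool) : ℕ → ℤ
  | 0 => c
  | 1 => c
  | (k+2) => if h (k+2) then chEB c h (k+1) else chEB c h (k+1) + 1

lemma chEA_le (c : ℤ) (h : ℕ → Bool) : ∀ k : ℕ, chEA c h k ≤ c
  | 0 => le_refl c
  | 1 => le_refl c
  | (k+2) => by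
      have := chEA_le c h (k+1)
      simp only [chEA]
      split <;> omega

lemma chEB_ge (c : ℤ) (h : ℕ → Bool) : ∀ k : ℕ, c ≤ chEB c h k
  | 0 => le_refl c
  | 1 => le_refl c
  | (k+2) => by
      have := chEB_ge c h (k+1)
      simp only [chEB]
      split <;> omega

lemma chEA_le_chEB (c : ℤ) (h : ℕ → Bool) (k : ℕ) : chEA c h k ≤ chEB c h k :=
  le_trans (chEA_le c h k) (chEB_ge c h k)

noncomputable def chA {I : Type*} (ii : ℤ → I) (c : ℤ) (h : ℕ → Bool) : ℕ → ℤ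
  | 0 => c
  | 1 => c
  | (k+2) => if h (k+2) then chEA c h (k+2)
             else aMin ii (chEA c h (k+2)) (chEB c h (k+2))

noncomputable def chB {I : Type*} (ii : ℤ → I) (c : ℤ) (h : ℕ → Bool) : ℕ → ℤ
  | 0 => c
  | 1 => c
  | (k+2) => if h (k+2) then bMax ii (chEA c h (k+2)) (chEB c h (k+2))
             else chEB c h (k+2)

/-- An admissible chain of `i`-boxes is uniquely determined by its initial
point `c = a₁ = b₁` and its sequence of horizontal moves (`𝓛`: the envelope grows to the
left and `𝔠_k = [ã_k, b̃_k(i_{ã_k})⁻]`; `𝓡`: the envelope grows to the right and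
`𝔠_k = [ã_k(i_{b̃_k})⁺, b̃_k]`); moreover every pair `(c, 𝔥)` arises from an admissible
chain, and the box attached at step `k` has the form dictated by the `k`-th move. -/
theorem admissibleChain_determined_by_moves
    {I : Type*} (ii : ℤ → I) (l : ℕ) :
    -- uniqueness: same initial point and same horizontal moves determine the chain
    (∀ C C' : AdmissibleChain I ii l, C.a 1 = C'.a 1 →
      (∀ k : ℕ, 2 ≤ k → k ≤ l →
        (C.ea k = C.ea (k - 1) - 1 ↔ C'.ea k = C'.ea (k - 1) - 1)) →
      ∀ k : ℕ, 1 ≤ k → k ≤ l → C.a k = C'.a k ∧ C.b k = C'.b k) ∧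
    -- the box at step `k` has the form dictated by the `k`-th horizontal move
    (∀ C : AdmissibleChain I ii l, ∀ k : ℕ, 2 ≤ k → k ≤ l →
      (C.ea k = C.ea (k - 1) - 1 →
        C.a k = C.ea k ∧ C.b k ≤ C.eb k ∧ ii (C.b k) = ii (C.ea k) ∧
        (∀ t : ℤ, C.b k < t → t ≤ C.eb k → ii t ≠ ii (C.ea k))) ∧
      (C.eb k = C.eb (k - 1) + 1 →
        C.b k = C.eb k ∧ C.ea k ≤ C.a k ∧ ii (C.a k) = ii (C.eb k) ∧
        (∀ t : ℤ, C.ea k ≤ t → t < C.a k → ii t ≠ ii (C.eb k)))) ∧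
    -- existence: every pair `(c, 𝔥)` determines an admissible chain
    (∀ (c : ℤ) (h : ℕ → Bool), ∃ C : AdmissibleChain I ii l, C.a 1 = c ∧
      ∀ k : ℕ, 2 ≤ k → k ≤ l →
        (h k = true → C.ea k = C.ea (k - 1) - 1 ∧ C.eb k = C.eb (k - 1)) ∧
        (h k = false → C.ea k = C.ea (k - 1) ∧ C.eb k = C.eb (k - 1) + 1)) := by
  refine ⟨?_, ?_, ?_⟩
  · -- uniqueness
    intro C C' hc hiff
    have base : C.b 1 = C'.b 1 := by rw [← C.base_eq, ← C'.base_eq]; exact hc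
    have env : ∀ k : ℕ, 1 ≤ k → k ≤ l → C.ea k = C'.ea k ∧ C.eb k = C'.eb k := by
      intro k
      induction k using Nat.strong_induction_on with
      | _ k IH =>
        intro h1 hl
        by_cases hk1 : k = 1
        · subst hk1
          refine ⟨?_, ?_⟩
          · rw [C.base_a, C'.base_a]; exact hc
          · rw [C.base_b, C'.base_b]; exact base
        · have h2 : 2 ≤ k := by omega
          obtain ⟨e1, e2⟩ := IH (k-1) (by omega) (by omega) (by omega)
          rcases C.env_step k h2 hl with ⟨l1, l2⟩ | ⟨r1, r2⟩ <;>
            rcases C'.env_step k h2 hl with ⟨l1', l2'⟩ | ⟨r1', r2'⟩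
          · exact ⟨by omega, by omega⟩
          · have := (hiff k h2 hl).mp l1; exfalso; omega
          · have := (hiff k h2 hl).mpr l1'; exfalso; omega
          · exact ⟨by omega, by omega⟩
    intro k h1 hl
    by_cases hk1 : k = 1
    · subst hk1; exact ⟨hc, base⟩
    · have h2 : 2 ≤ k := by omega
      obtain ⟨e1, e2⟩ := env k h1 hl
      rcases C.env_step k h2 hl with ⟨l1, l2⟩ | ⟨r1, r2⟩
      · have l1' := (hiff k h2 hl).mp l1
        obtain ⟨ha, hbe, hii, hmax⟩ := (boxForm ii C k h2 hl).1 l1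
        obtain ⟨ha', hbe', hii', hmax'⟩ := (boxForm ii C' k h2 hl).1 l1'
        refine ⟨by rw [ha, ha', e1], ?_⟩
        refine maxUnique hbe hii hmax ?_ ?_ ?_
        · rw [e2]; exact hbe'
        · rw [← e1] at hii'; exact hii'
        · rw [← e1, ← e2] at hmax'; exact hmax'
      · have r2' : C'.eb k = C'.eb (k-1) + 1 := by
          rcases C'.env_step k h2 hl with ⟨l1', l2'⟩ | ⟨r1', r2'⟩
          · have := (hiff k h2 hl).mpr l1'; exfalso; omega
          · exact r2'
        obtain ⟨hb, hea, hii, hmin⟩ := (boxForm ii C k h2 hl).2 r2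
        obtain ⟨hb', hea', hii', hmin'⟩ := (boxForm ii C' k h2 hl).2 r2'
        refine ⟨?_, by rw [hb, hb', e2]⟩
        refine minUnique hea hii hmin ?_ ?_ ?_
        · rw [e1]; exact hea'
        · rw [← e2] at hii'; exact hii'
        · rw [← e1, ← e2] at hmin'; exact hmin'
  · -- form of the box
    intro C k h2 hl
    exact boxForm ii C k h2 hl
  · -- existence
    intro c h
    refine ⟨⟨chA ii c h, chB ii c h, chEA c h, chEB c h,
      rfl, rfl, rfl, ?_, ?_, ?_, ?_⟩, rfl, ?_⟩
    · intro k h2 hl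
      obtain ⟨m, rfl⟩ : ∃ m, k = m + 2 := ⟨k - 2, by omega⟩
      simp only [show m + 2 - 1 = m + 1 from rfl, chEA, chEB]
      cases hh : h (m+2) <;> simp [hh]
    · intro k h2 hl hEA
      obtain ⟨m, rfl⟩ : ∃ m, k = m + 2 := ⟨k - 2, by omega⟩
      rw [show m + 2 - 1 = m + 1 from rfl] at hEA
      cases hh : h (m+2) with
      | true => simp [chA, hh]
      | false =>
        exfalso
        have : chEA c h (m+2) = chEA c h (m+1) := by simp [chEA, hh]
        omega
    · intro k h2 hl hEB
      obtain ⟨m, rfl⟩ : ∃ m, k = m + 2 := ⟨k - 2, by omega⟩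
      rw [show m + 2 - 1 = m + 1 from rfl] at hEB
      cases hh : h (m+2) with
      | false => simp [chB, hh]
      | true =>
        exfalso
        have : chEB c h (m+2) = chEB c h (m+1) := by simp [chEB, hh]
        omega
    · intro k h1 hl
      by_cases hk1 : k = 1
      · subst hk1
        refine Or.inl ⟨rfl, le_refl _, le_refl _, rfl, ?_⟩
        intro t ht1 ht2
        exfalso
        have : chEB c h 1 = c := rfl
        have : chB ii c h 1 = c := rfl
        omega
      · have h2 : 2 ≤ k := by omega
        obtain ⟨m, rfl⟩ : ∃ m, k = m + 2 := ⟨k - 2, by omega⟩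
        cases hh : h (m+2) with
        | true =>
          obtain ⟨s1, s2, s3, s4⟩ := bMax_spec ii (chEA c h (m+2)) (chEB c h (m+2))
            (chEA_le_chEB c h (m+2))
          have ha : chA ii c h (m+2) = chEA c h (m+2) := by simp [chA, hh]
          have hb : chB ii c h (m+2) = bMax ii (chEA c h (m+2)) (chEB c h (m+2)) := by
            simp [chB, hh]
          refine Or.inl ?_
          rw [ha, hb]
          exact ⟨rfl, s1, s2, s3, s4⟩
        | false =>
          obtain ⟨s1, s2, s3, s4⟩ := aMin_spec ii (chEA c h (m+2)) (chEB c h (m+2))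
            (chEA_le_chEB c h (m+2))
          have ha : chA ii c h (m+2) = aMin ii (chEA c h (m+2)) (chEB c h (m+2)) := by
            simp [chA, hh]
          have hb : chB ii c h (m+2) = chEB c h (m+2) := by simp [chB, hh]
          refine Or.inr ?_
          rw [ha, hb]
          exact ⟨rfl, s1, s2, s3, s4⟩
    · intro k h2 hl
      obtain ⟨m, rfl⟩ : ∃ m, k = m + 2 := ⟨k - 2, by omega⟩
      rw [show m + 2 - 1 = m + 1 from rfl]
      constructor
      · intro hh
        constructor <;> simp [chEA, chEB, hh]
      · intro hh
        constructor <;> simp [chEA, chEB, hh]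
end

section
/- Any two admissible chains of i-boxes with the same range can be obtained from one another by a finite sequence of box moves. -/
/-- A single box move on the combinatorial data `(c, 𝔥)` of an admissible chain of
`i`-boxes, where `𝔥` is a list of horizontal moves (`true` = `𝓡`, `false` = `𝓛`):
either flip the first move (adjusting `c` by `±1`), or flip two consecutive distinct
moves `𝓗_{m-1} ≠ 𝓗_m` (`2 ≤ m`). -/
def boxMoveStep (p q : ℤ × List Bool) : Prop :=
  (∃ (hd : Bool) (tl : List Bool),
      p.2 = hd :: tl ∧ q.2 = (!hd) :: tl ∧ q.1 = p.1 + (if hd then 1 else -1)) ∨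
  (∃ m : ℕ, 2 ≤ m ∧ m ≤ p.2.length ∧
      p.2.getD (m - 2) false ≠ p.2.getD (m - 1) false ∧
      q.1 = p.1 ∧
      q.2 = (p.2.set (m - 2) (!p.2.getD (m - 2) false)).set
              (m - 1) (!p.2.getD (m - 1) false))

lemma flipStep (c : ℤ) (h : Bool) (t : List Bool) :
    boxMoveStep (c, h :: t) (c + (if h then 1 else -1), (!h) :: t) :=
  Or.inl ⟨h, t, rfl, rfl, rfl⟩

lemma swapStep (c : ℤ) {x y : Bool} (r : List Bool) (hxy : x ≠ y) :
    boxMoveStep (c, x :: y :: r) (c, y :: x :: r) := by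
  refine Or.inr ⟨2, le_refl 2, by simp, by simpa using hxy, rfl, ?_⟩
  cases x <;> cases y <;> simp_all

lemma liftStep (b : Bool) {p q : ℤ × List Bool} (h : boxMoveStep p q) :
    Relation.ReflTransGen boxMoveStep (p.1, b :: p.2) (q.1, b :: q.2) := by
  rcases h with ⟨hd, tl, hl, hl', hc⟩ | ⟨m, hm2, hml, hne, hc, hq⟩
  · rw [hl, hl', hc]
    by_cases hb : b = hd
    · subst hb
      exact (Relation.ReflTransGen.single (flipStep _ b (b :: tl))).tail
        (swapStep _ tl (by simp))
    · have hb' : b = !hd := by cases b <;> cases hd <;> simp_all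
      subst hb'
      exact (Relation.ReflTransGen.single (swapStep _ tl (by simp))).tail
        (flipStep _ hd ((!hd) :: tl))
  · obtain ⟨k, rfl⟩ : ∃ k, m = k + 2 := ⟨m - 2, by omega⟩
    simp only [Nat.add_sub_cancel] at hne hq
    have h21 : k + 2 - 1 = k + 1 := by omega
    rw [h21] at hne hq
    refine Relation.ReflTransGen.single (Or.inr ⟨k + 3, by omega, by simp; omega, ?_, hc, ?_⟩)
    · simpa using hne
    · have h32 : k + 3 - 2 = k + 1 := by omega
      have h31 : k + 3 - 1 = k + 2 := by omega
      rw [h32, h31]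
      simp [hq]

lemma liftRTG (b : Bool) {p q : ℤ × List Bool}
    (h : Relation.ReflTransGen boxMoveStep p q) :
    Relation.ReflTransGen boxMoveStep (p.1, b :: p.2) (q.1, b :: q.2) := by
  induction h with
  | refl => exact Relation.ReflTransGen.refl
  | tail h1 h2 ih => exact ih.trans (liftStep b h2)

lemma canon : ∀ (H : List Bool) (c : ℤ),
    Relation.ReflTransGen boxMoveStep (c, H)
      (c - (H.count false : ℤ), List.replicate H.length true) := by
  intro H
  induction H with
  | nil =>
    intro c
    simp only [List.count_nil, Nat.cast_zero, sub_zero, List.length_nil, List.replicate_zero]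
    exact Relation.ReflTransGen.refl
  | cons b tl ih =>
    intro c
    have h1 := liftRTG b (ih c)
    cases b with
    | true =>
      refine h1.trans ?_
      have : ((true :: tl).count false : ℤ) = (tl.count false : ℤ) := by simp
      rw [this]
      simp only [List.length_cons, List.replicate_succ]
      exact Relation.ReflTransGen.refl
    | false =>
      refine h1.tail ?_
      have := flipStep (c - (tl.count false : ℤ)) false (List.replicate tl.length true)
      have hcnt : ((false :: tl).count false : ℤ) = (tl.count false : ℤ) + 1 := by
        simp [List.count_cons]
      rw [hcnt]
      have heq : c - ((tl.count false : ℤ) + 1) = c - (tl.count false : ℤ) + (-1) := by ring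
      rw [heq]
      simpa [List.replicate_succ] using this

lemma canon' : ∀ (H : List Bool) (c : ℤ),
    Relation.ReflTransGen boxMoveStep
      (c - (H.count false : ℤ), List.replicate H.length true) (c, H) := by
  intro H
  induction H with
  | nil =>
    intro c
    simp only [List.count_nil, Nat.cast_zero, sub_zero, List.length_nil, List.replicate_zero]
    exact Relation.ReflTransGen.refl
  | cons b tl ih =>
    intro c
    have h1 := liftRTG b (ih c)
    cases b with
    | true =>
      have : ((true :: tl).count false : ℤ) = (tl.count false : ℤ) := by simp
      rw [this]
      simpa [List.replicate_succ] using h1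
    | false =>
      refine Relation.ReflTransGen.head ?_ h1
      have := flipStep (c - ((false :: tl).count false : ℤ)) true (List.replicate tl.length true)
      norm_num at this
      have hcnt : ((false :: tl).count false : ℤ) = (tl.count false : ℤ) + 1 := by
        simp [List.count_cons]
      have heq : c - ((tl.count false : ℤ) + 1) + 1 = c - (tl.count false : ℤ) := by ring
      rw [heq] at this
      rw [hcnt]
      simpa [List.replicate_succ] using this

/-- Any two admissible chains of `i`-boxes with the same range — encoded
as pairs `(c, 𝔥)` of the same length with `c − #𝓛(𝔥)` equal — can be obtained from one
another by a finite sequence of box moves. -/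
theorem boxMoves_transitive_on_fixed_range
    (c c' : ℤ) (H H' : List Bool)
    (hlen : H.length = H'.length)
    (hrange : c - (H.count false : ℤ) = c' - (H'.count false : ℤ)) :
    Relation.ReflTransGen boxMoveStep (c, H) (c', H') := by
  refine (canon H c).trans ?_
  rw [hrange, hlen]
  exact canon' H' c'
end

section
/- Let (L, B̃) be a compatible pair consisting of a skew-symmetric J×J integer matrix L and an exchange matrix B̃ = (b_{ij})_{i∈J, j∈J_ex} with skew-symmetric principal part, i.e., Σ_{k∈J} L_{ki} b_{kj} = 2δ_{ij} for all i ∈ J, j ∈ J_ex. Then for any k ∈ J_ex, the mutated pair (μ_k(L), μ_k(B̃)) defined by the standard mutation formulas is again compatible, and μ_k is an involution: μ_k(μ_k(L, B̃)) = (L, B̃). -/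
noncomputable section

/-- Mutation in direction `k` of the exchange matrix `B̃`:
`μ_k(B̃)_{ij} = −b_{ij}` if `i = k` or `j = k`, and
`b_{ij} + (−1)^{δ(b_{ik}<0)} max(b_{ik}b_{kj}, 0)` otherwise. -/
def muB {J : Type*} [DecidableEq J] (B : J → J → ℤ) (k : J) : J → J → ℤ :=
  fun i j =>
    if i = k ∨ j = k then -B i j
    else B i j + (if B i k < 0 then -1 else 1) * max (B i k * B k j) 0

/-- Mutation in direction `k` of the skew-symmetric matrix `L`:
`μ_k(L)_{ij} = −L_{ij} − Σ_{b_{sk}<0} b_{sk}L_{is}` if `i ≠ k`, `j = k`;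
`−L_{ij} + Σ_{b_{sk}>0} b_{sk}L_{sj}` if `i = k`, `j ≠ k`; and `L_{ij}` otherwise. -/
def muL {J : Type*} [DecidableEq J] (L B : J → J → ℤ) (k : J) : J → J → ℤ :=
  fun i j =>
    if i ≠ k ∧ j = k then
      -L i j - ∑ᶠ s : J, (if B s k < 0 then B s k * L i s else 0)
    else if i = k ∧ j ≠ k then
      -L i j + ∑ᶠ s : J, (if 0 < B s k then B s k * L s j else 0)
    else L i j

private lemma ite_max_key (c b : ℤ) :
    (if c < 0 then (-1:ℤ) else 1) * max (c * b) 0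
      = b * max c 0 + (if b < 0 then -b else 0) * c := by
  rcases lt_trichotomy c 0 with hc | hc | hc <;>
    rcases lt_trichotomy b 0 with hb | hb | hb <;>
      simp [hc, hb, max_def] <;> split_ifs <;> nlinarith

private lemma sign_max_skew (x y : ℤ) :
    (if x < 0 then (-1:ℤ) else 1) * max (x * y) 0
      = -((if 0 < y then (-1:ℤ) else 1) * max (x * y) 0) := by
  rcases lt_trichotomy x 0 with hx | hx | hx <;>
    rcases lt_trichotomy y 0 with hy | hy | hy <;>
      simp [hx, hy, max_def] <;> split_ifs <;> nlinarith

private lemma sign_max_inv (x y : ℤ) :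
    (if x < 0 then (-1:ℤ) else 1) * max (x * y) 0
      + (if -x < 0 then (-1:ℤ) else 1) * max (x * y) 0 = 0 := by
  rcases lt_trichotomy x 0 with hx | hx | hx <;>
      simp [hx, max_def] <;> split_ifs <;> nlinarith

private lemma sum_antisymm {J : Type*} (S : Finset J) (g : J → J → ℤ)
    (h : ∀ s t, g s t = -g t s) : ∑ s ∈ S, ∑ t ∈ S, g s t = 0 := by
  have key : (∑ s ∈ S, ∑ t ∈ S, g s t) = -(∑ s ∈ S, ∑ t ∈ S, g s t) := by
    conv_lhs => rw [Finset.sum_comm]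
    rw [← Finset.sum_neg_distrib]
    exact Finset.sum_congr rfl fun t _ => by
      rw [← Finset.sum_neg_distrib]
      exact Finset.sum_congr rfl fun s _ => h s t
  linarith

private lemma finsum_eq_sum_of {J : Type*} (S : Finset J) (g : J → ℤ)
    (h : ∀ s, g s ≠ 0 → s ∈ S) : ∑ᶠ s, g s = ∑ s ∈ S, g s :=
  finsum_eq_finset_sum_of_support_subset g (fun s hs => h s hs)

/-- If `(L, B̃)` is a compatible pair (`L` skew-symmetric, `B̃` an
exchange matrix with skew-symmetric principal part and `Σ_k L_{ki}b_{kj} = 2δ_{ij}`),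
then for any exchangeable `k` the mutated pair `(μ_k(L), μ_k(B̃))` is again compatible,
and `μ_k` is an involution. -/
theorem mutation_compatible_and_involutive
    {J : Type*} [DecidableEq J] (Jex : Set J)
    (L B : J → J → ℤ)
    (hLskew : ∀ i j, L i j = -L j i)
    (hBcolfin : ∀ j ∈ Jex, {i : J | B i j ≠ 0}.Finite)
    (hBcol : ∀ (i j : J), j ∉ Jex → B i j = 0)
    (hBprin : ∀ i ∈ Jex, ∀ j ∈ Jex, B i j = -B j i)
    (hcompat : ∀ i : J, ∀ j ∈ Jex,
      (∑ᶠ s : J, L s i * B s j) = if i = j then 2 else 0)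
    (k : J) (hk : k ∈ Jex) :
    (∀ i j, muL L B k i j = -(muL L B k j i)) ∧
    (∀ j ∈ Jex, {i : J | muB B k i j ≠ 0}.Finite) ∧
    (∀ i ∈ Jex, ∀ j ∈ Jex, muB B k i j = -(muB B k j i)) ∧
    (∀ i : J, ∀ j ∈ Jex,
      (∑ᶠ s : J, muL L B k s i * muB B k s j) = if i = j then 2 else 0) ∧
    (∀ i j, muB (muB B k) k i j = B i j) ∧
    (∀ i j, muL (muL L B k) (muB B k) k i j = L i j) := by
  classical
  have hBkk : B k k = 0 := by have := hBprin k hk k hk; omega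
  have hLkk : ∀ i, L i i = 0 := fun i => by have := hLskew i i; omega
  have hSkfin : {s : J | B s k ≠ 0}.Finite := hBcolfin k hk
  set Sk : Finset J := hSkfin.toFinset with hSkdef
  have hmemSk : ∀ s, B s k ≠ 0 → s ∈ Sk := fun s hs => hSkfin.mem_toFinset.mpr hs
  -- conversion of the compatibility sums to finset sums
  have hcompatS : ∀ (S : Finset J) (i : J), ∀ j ∈ Jex, (∀ s, B s j ≠ 0 → s ∈ S) →
      ∑ s ∈ S, L s i * B s j = if i = j then 2 else 0 := by
    intro S i j hj hS
    rw [← finsum_eq_sum_of S _ (fun s hs => hS s (by intro h0; simp [h0] at hs))]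
    exact hcompat i j hj
  -- sum splitting along signs
  have hsplit : ∀ g : J → ℤ,
      (∑ᶠ s, if B s k < 0 then B s k * g s else 0)
        + (∑ᶠ s, if 0 < B s k then B s k * g s else 0) = ∑ s ∈ Sk, B s k * g s := by
    intro g
    rw [finsum_eq_sum_of Sk _ (fun s hs => hmemSk s (by intro h0; simp [h0] at hs)),
      finsum_eq_sum_of Sk _ (fun s hs => hmemSk s (by intro h0; simp [h0] at hs)),
      ← Finset.sum_add_distrib]
    refine Finset.sum_congr rfl fun s _ => ?_
    rcases lt_trichotomy (B s k) 0 with h | h | h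
    · rw [if_pos h, if_neg (by omega)]; ring
    · rw [if_neg (by omega), if_neg (by omega), h]; ring
    · rw [if_neg (by omega), if_pos h]; ring
  have hzeroL : ∀ i,
      (∑ᶠ s, if B s k < 0 then B s k * L i s else 0)
        + (∑ᶠ s, if 0 < B s k then B s k * L i s else 0)
        = -(if i = k then 2 else 0) := by
    intro i
    rw [hsplit (fun s => L i s)]
    have : ∑ s ∈ Sk, B s k * L i s = -∑ s ∈ Sk, L s i * B s k := by
      rw [← Finset.sum_neg_distrib]
      exact Finset.sum_congr rfl fun s _ => by rw [hLskew i s]; ring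
    rw [this, hcompatS Sk i k hk hmemSk]
  have hzeroR : ∀ j,
      (∑ᶠ s, if B s k < 0 then B s k * L s j else 0)
        + (∑ᶠ s, if 0 < B s k then B s k * L s j else 0)
        = (if j = k then 2 else 0) := by
    intro j
    rw [hsplit (fun s => L s j)]
    have : ∑ s ∈ Sk, B s k * L s j = ∑ s ∈ Sk, L s j * B s k :=
      Finset.sum_congr rfl fun s _ => by ring
    rw [this, hcompatS Sk j k hk hmemSk]
  -- pointwise descriptions of muB
  have hB'k : ∀ s, muB B k s k = -B s k := fun s => by simp [muB]
  have hB'kj : ∀ j, muB B k k j = -B k j := fun j => by simp [muB]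
  have hB'e : ∀ s j, s ≠ k → j ≠ k →
      muB B k s j = B s j + B k j * max (B s k) 0
        + (if B k j < 0 then -B k j else 0) * B s k := by
    intro s j hs hj
    have : ¬(s = k ∨ j = k) := by tauto
    simp only [muB, this, if_false]
    rw [ite_max_key]
    ring
  refine ⟨?_, ?_, ?_, ?_, ?_, ?_⟩
  · -- part 1 : L' skew
    intro i j
    by_cases hi : i = k <;> by_cases hj : j = k
    · rw [hi, hj]
      simp only [muL, ne_eq, not_true_eq_false, false_and, and_false, if_false]
      have := hLkk k; omega
    · rw [hi]
      have h1 : muL L B k k j = -L k j + ∑ᶠ s, (if 0 < B s k then B s k * L s j else 0) := by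
        simp [muL, hj]
      have h2 : muL L B k j k = -L j k - ∑ᶠ s, (if B s k < 0 then B s k * L j s else 0) := by
        simp [muL, hj]
      rw [h1, h2]
      have h3 : (∑ᶠ s, if 0 < B s k then B s k * L s j else 0)
          = -∑ᶠ s, (if 0 < B s k then B s k * L j s else 0) := by
        rw [← finsum_neg_distrib]
        exact finsum_congr fun s => by rw [hLskew s j]; split <;> ring
      have h4 := hzeroL j
      rw [if_neg hj] at h4
      rw [h3, hLskew k j]
      linarith
    · rw [hj]
      have h1 : muL L B k i k = -L i k - ∑ᶠ s, (if B s k < 0 then B s k * L i s else 0) := by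
        simp [muL, hi]
      have h2 : muL L B k k i = -L k i + ∑ᶠ s, (if 0 < B s k then B s k * L s i else 0) := by
        simp [muL, hi]
      rw [h1, h2]
      have h3 : (∑ᶠ s, if 0 < B s k then B s k * L s i else 0)
          = -∑ᶠ s, (if 0 < B s k then B s k * L i s else 0) := by
        rw [← finsum_neg_distrib]
        exact finsum_congr fun s => by rw [hLskew s i]; split <;> ring
      have h4 := hzeroL i
      rw [if_neg hi] at h4
      rw [h3, hLskew k i]
      linarith
    · simp [muL, hi, hj, hLskew i j]
  · -- part 2 : column finiteness
    intro j hj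
    by_cases hjk : j = k
    · subst hjk
      refine hSkfin.subset fun i hi => ?_
      simp only [Set.mem_setOf_eq] at hi ⊢
      intro h0; apply hi; rw [hB'k, h0, neg_zero]
    · refine ((hBcolfin j hj).union hSkfin).subset fun i hi => ?_
      simp only [Set.mem_setOf_eq, Set.mem_union] at hi ⊢
      by_contra hcon
      push_neg at hcon
      apply hi
      by_cases hik : i = k
      · rw [hik, hB'kj]
        have : B k j = 0 := by rw [← hik]; exact hcon.1
        rw [this, neg_zero]
      · rw [hB'e i j hik hjk, hcon.1, hcon.2]
        simp
  · -- part 3 : principal part skew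
    intro i hi j hj
    by_cases hik : i = k <;> by_cases hjk : j = k
    · rw [hik, hjk]
      simp [muB, hBkk]
    · rw [hik]
      rw [hB'kj j, hB'k j, hBprin k hk j hj]
    · rw [hjk]
      rw [hB'k i, hB'kj i, hBprin i hi k hk]
    · have e1 : muB B k i j = B i j + (if B i k < 0 then -1 else 1) * max (B i k * B k j) 0 := by
        have : ¬(i = k ∨ j = k) := by tauto
        simp only [muB, this, if_false]
      have e2 : muB B k j i = B j i + (if B j k < 0 then -1 else 1) * max (B j k * B k i) 0 := by
        have : ¬(j = k ∨ i = k) := by tauto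
        simp only [muB, this, if_false]
      rw [e1, e2, hBprin j hj i hi, hBprin j hj k hk, hBprin k hk i hi]
      have hm : -B k j * -B i k = B i k * B k j := by ring
      rw [hm]
      have hs := sign_max_skew (B i k) (B k j)
      have hcond : (if -B k j < 0 then (-1:ℤ) else 1) = (if 0 < B k j then (-1:ℤ) else 1) := by
        by_cases h : 0 < B k j <;> simp [h] <;> omega
      rw [hcond, hs]; ring
  · -- part 4 : compatibility of the mutated pair
    intro i j hj
    have hSjfin : {s : J | B s j ≠ 0}.Finite := hBcolfin j hj
    set Sj : Finset J := hSjfin.toFinset with hSjdef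
    have hmemSj : ∀ s, B s j ≠ 0 → s ∈ Sj := fun s hs => hSjfin.mem_toFinset.mpr hs
    set S : Finset J := insert k (Sk ∪ Sj) with hSdef
    have hkS : k ∈ S := Finset.mem_insert_self k _
    have hSk' : ∀ s, B s k ≠ 0 → s ∈ S := fun s hs =>
      Finset.mem_insert_of_mem (Finset.mem_union_left _ (hmemSk s hs))
    have hSj' : ∀ s, B s j ≠ 0 → s ∈ S := fun s hs =>
      Finset.mem_insert_of_mem (Finset.mem_union_right _ (hmemSj s hs))
    have hCk : ∀ i', ∑ s ∈ S, L s i' * B s k = if i' = k then 2 else 0 :=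
      fun i' => hcompatS S i' k hk hSk'
    have hCj : ∀ i', ∑ s ∈ S, L s i' * B s j = if i' = j then 2 else 0 :=
      fun i' => hcompatS S i' j hj hSj'
    have hT : ∀ s, (∑ᶠ t, if B t k < 0 then B t k * L s t else 0)
        = ∑ t ∈ S, (if B t k < 0 then B t k * L s t else 0) := fun s =>
      finsum_eq_sum_of S _ (fun t ht => hSk' t (by intro h0; simp [h0] at ht))
    have hP : ∀ i', (∑ᶠ t, if 0 < B t k then B t k * L t i' else 0)
        = ∑ t ∈ S, (if 0 < B t k then B t k * L t i' else 0) := fun i' =>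
      finsum_eq_sum_of S _ (fun t ht => hSk' t (by intro h0; simp [h0] at ht))
    have hgoal : (∑ᶠ s, muL L B k s i * muB B k s j)
        = ∑ s ∈ S, muL L B k s i * muB B k s j := by
      apply finsum_eq_sum_of
      intro s hs
      by_cases hsk : s = k
      · rw [hsk]; exact hkS
      · by_cases hjk' : j = k
        · refine hSk' s (fun h0 => hs ?_)
          rw [hjk', hB'k s, h0]; ring
        · by_cases h1 : B s j = 0
          · refine hSk' s (fun h2 => hs ?_)
            rw [hB'e s j hsk hjk', h1, h2]
            simp
          · exact hSj' s h1
    rw [hgoal]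
    have hsumsplit : ∀ g : J → ℤ, ∑ s ∈ S, g s = g k + ∑ s ∈ S.erase k, g s := by
      intro g
      conv_lhs => rw [← Finset.insert_erase hkS]
      rw [Finset.sum_insert (Finset.notMem_erase k S)]
    -- the sign-swap double-sum tool
    have hswap : ∀ w : J → ℤ,
        ∑ s ∈ S, (∑ t ∈ S, if B t k < 0 then B t k * L s t else 0) * w s
          = ∑ t ∈ S, (if B t k < 0 then B t k * (∑ s ∈ S, L s t * w s) else 0) := by
      intro w
      have h1 : ∀ s ∈ S, (∑ t ∈ S, if B t k < 0 then B t k * L s t else 0) * w s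
          = ∑ t ∈ S, (if B t k < 0 then B t k * (L s t * w s) else 0) := by
        intro s _
        rw [Finset.sum_mul]
        exact Finset.sum_congr rfl fun t _ => by split <;> ring
      rw [Finset.sum_congr rfl h1, Finset.sum_comm]
      refine Finset.sum_congr rfl fun t _ => ?_
      by_cases h : B t k < 0
      · simp only [if_pos h]; rw [Finset.mul_sum]
      · simp only [if_neg h, Finset.sum_const_zero]
    have hnek : ∀ t, B t k < 0 → t ≠ k := fun t h e => by rw [e, hBkk] at h; omega
    have hnek' : ∀ t, 0 < B t k → t ≠ k := fun t h e => by rw [e, hBkk] at h; omega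
    -- ∑_S T s * B s k = 0
    have W6 : ∑ s ∈ S, (∑ t ∈ S, if B t k < 0 then B t k * L s t else 0) * B s k = 0 := by
      rw [hswap (fun s => B s k)]
      refine Finset.sum_eq_zero fun t _ => ?_
      by_cases h : B t k < 0
      · rw [if_pos h, hCk t, if_neg (hnek t h), mul_zero]
      · rw [if_neg h]
    -- ∑_S T s * B s j
    have W4 : ∑ s ∈ S, (∑ t ∈ S, if B t k < 0 then B t k * L s t else 0) * B s j
        = if B j k < 0 then 2 * B j k else 0 := by
      rw [hswap (fun s => B s j)]
      have h1 : ∀ t ∈ S, (if B t k < 0 then B t k * (∑ s ∈ S, L s t * B s j) else 0)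
          = if t = j then (if B j k < 0 then 2 * B j k else 0) else 0 := by
        intro t _
        rw [hCj t]
        by_cases ht : t = j
        · rw [if_pos ht, if_pos ht, ht]
          by_cases hb : B j k < 0 <;> simp [hb] <;> ring
        · rw [if_neg ht, if_neg ht, mul_zero, ite_self]
      rw [Finset.sum_congr rfl h1, Finset.sum_ite_eq' S j]
      by_cases hb : B j k < 0
      · rw [if_pos (hSk' j (fun h0 => by rw [h0] at hb; omega))]
      · simp [hb]
    -- ∑_S T s * max (B s k) 0 = 0
    have hMN : ∀ t, (∑ s ∈ S, L s t * max (B s k) 0)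
        + (∑ s ∈ S, if B s k < 0 then B s k * L s t else 0) = if t = k then 2 else 0 := by
      intro t
      rw [← Finset.sum_add_distrib, ← hCk t]
      refine Finset.sum_congr rfl fun s _ => ?_
      rcases lt_trichotomy (B s k) 0 with h | h | h
      · rw [if_pos h, max_eq_right h.le]; ring
      · rw [if_neg (by omega), h, max_self]; ring
      · rw [if_neg (by omega), max_eq_left h.le]; ring
    have W5 : ∑ s ∈ S, (∑ t ∈ S, if B t k < 0 then B t k * L s t else 0) * max (B s k) 0
        = 0 := by
      rw [hswap (fun s => max (B s k) 0)]
      have h1 : ∀ t ∈ S, (if B t k < 0 then B t k * (∑ s ∈ S, L s t * max (B s k) 0) else 0)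
          = ∑ s ∈ S, (if B t k < 0 then
              -(if B s k < 0 then B t k * (B s k * L s t) else 0) else 0) := by
        intro t _
        by_cases h : B t k < 0
        · simp only [if_pos h]
          have h2 : (∑ s ∈ S, L s t * max (B s k) 0)
              = -(∑ s ∈ S, if B s k < 0 then B s k * L s t else 0) := by
            have := hMN t
            rw [if_neg (hnek t h)] at this
            linarith
          rw [h2, ← Finset.sum_neg_distrib, Finset.mul_sum]
          refine Finset.sum_congr rfl fun s _ => ?_
          split <;> ring
        · simp only [if_neg h, Finset.sum_const_zero]
      rw [Finset.sum_congr rfl h1]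
      refine sum_antisymm S _ fun t s => ?_
      by_cases h1 : B t k < 0 <;> by_cases h2 : B s k < 0 <;> simp [h1, h2]
      rw [hLskew s t]; ring
    by_cases hjk : j = k
    · -- case j = k
      rw [hjk]
      have e1 : ∀ s ∈ S, muL L B k s i * muB B k s k = muL L B k s i * (-B s k) :=
        fun s _ => by rw [hB'k s]
      rw [Finset.sum_congr rfl e1]
      by_cases hik : i = k
      · rw [hik, if_pos rfl]
        have h1 : ∑ s ∈ S, muL L B k s k * (-B s k)
            = muL L B k k k * (-B k k) + ∑ s ∈ S.erase k, muL L B k s k * (-B s k) :=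
          hsumsplit _
        rw [h1, hBkk]
        have e2 : ∀ s ∈ S.erase k, muL L B k s k * (-B s k)
            = L s k * B s k
              + (∑ t ∈ S, if B t k < 0 then B t k * L s t else 0) * B s k := by
          intro s hs
          have hsk := Finset.ne_of_mem_erase hs
          have h2 : muL L B k s k = -L s k - ∑ᶠ t, (if B t k < 0 then B t k * L s t else 0) := by
            simp [muL, hsk]
          rw [h2, hT s]; ring
        rw [Finset.sum_congr rfl e2, Finset.sum_add_distrib]
        have v1 : ∑ s ∈ S.erase k, L s k * B s k = 2 := by
          have h3 : ∑ s ∈ S, L s k * B s k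
              = L k k * B k k + ∑ s ∈ S.erase k, L s k * B s k := hsumsplit _
          rw [hCk k, if_pos rfl, hBkk, mul_zero, zero_add] at h3
          omega
        have v2 : ∑ s ∈ S.erase k, (∑ t ∈ S, if B t k < 0 then B t k * L s t else 0) * B s k
            = 0 := by
          have h3 : ∑ s ∈ S, (∑ t ∈ S, if B t k < 0 then B t k * L s t else 0) * B s k
              = (∑ t ∈ S, if B t k < 0 then B t k * L k t else 0) * B k k
                + ∑ s ∈ S.erase k, (∑ t ∈ S, if B t k < 0 then B t k * L s t else 0) * B s k :=
            hsumsplit _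
          rw [W6, hBkk, mul_zero, zero_add] at h3
          omega
        rw [v1, v2]
        ring
      · rw [if_neg hik]
        have h1 : ∑ s ∈ S, muL L B k s i * (-B s k)
            = muL L B k k i * (-B k k) + ∑ s ∈ S.erase k, muL L B k s i * (-B s k) :=
          hsumsplit _
        rw [h1, hBkk]
        have e2 : ∀ s ∈ S.erase k, muL L B k s i * (-B s k) = -(L s i * B s k) := by
          intro s hs
          have hsk := Finset.ne_of_mem_erase hs
          have h2 : muL L B k s i = L s i := by simp [muL, hsk, hik]
          rw [h2]; ring
        rw [Finset.sum_congr rfl e2, Finset.sum_neg_distrib]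
        have v1 : ∑ s ∈ S.erase k, L s i * B s k = 0 := by
          have h3 : ∑ s ∈ S, L s i * B s k
              = L k i * B k k + ∑ s ∈ S.erase k, L s i * B s k := hsumsplit _
          rw [hCk i, if_neg hik, hBkk, mul_zero, zero_add] at h3
          omega
        rw [v1]
        ring
    · -- case j ≠ k
      have hbj : B j k = -B k j := hBprin j hj k hk
      by_cases hik : i = k
      · -- i = k, j ≠ k : target 0
        rw [hik, if_neg (fun e => hjk e.symm)]
        have h1 : ∑ s ∈ S, muL L B k s k * muB B k s j
            = muL L B k k k * muB B k k j
              + ∑ s ∈ S.erase k, muL L B k s k * muB B k s j := hsumsplit _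
        have hkterm : muL L B k k k * muB B k k j = 0 := by
          have : muL L B k k k = L k k := by simp [muL]
          rw [this, hLkk, zero_mul]
        rw [h1, hkterm, zero_add]
        have e2 : ∀ s ∈ S.erase k, muL L B k s k * muB B k s j
            = -(L s k * B s j) - B k j * (L s k * max (B s k) 0)
              - (if B k j < 0 then -B k j else 0) * (L s k * B s k)
              - (∑ t ∈ S, if B t k < 0 then B t k * L s t else 0) * B s j
              - B k j * ((∑ t ∈ S, if B t k < 0 then B t k * L s t else 0) * max (B s k) 0)
              - (if B k j < 0 then -B k j else 0)
                  * ((∑ t ∈ S, if B t k < 0 then B t k * L s t else 0) * B s k) := by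
          intro s hs
          have hsk := Finset.ne_of_mem_erase hs
          have h2 : muL L B k s k = -L s k - ∑ᶠ t, (if B t k < 0 then B t k * L s t else 0) := by
            simp [muL, hsk]
          rw [h2, hT s, hB'e s j hsk hjk]
          ring
        rw [Finset.sum_congr rfl e2]
        simp only [Finset.sum_sub_distrib, Finset.sum_neg_distrib, ← Finset.mul_sum]
        -- now provide values for the six sums over S.erase k
        have v1 : ∑ s ∈ S.erase k, L s k * B s j = 0 := by
          have h3 : ∑ s ∈ S, L s k * B s j
              = L k k * B k j + ∑ s ∈ S.erase k, L s k * B s j := hsumsplit _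
          rw [hCj k, if_neg (fun e => hjk e.symm), hLkk, zero_mul, zero_add] at h3
          omega
        have v3 : ∑ s ∈ S.erase k, L s k * B s k = 2 := by
          have h3 : ∑ s ∈ S, L s k * B s k
              = L k k * B k k + ∑ s ∈ S.erase k, L s k * B s k := hsumsplit _
          rw [hCk k, if_pos rfl, hBkk, mul_zero, zero_add] at h3
          omega
        have v6 : ∑ s ∈ S.erase k, (∑ t ∈ S, if B t k < 0 then B t k * L s t else 0) * B s k
            = 0 := by
          have h3 : ∑ s ∈ S, (∑ t ∈ S, if B t k < 0 then B t k * L s t else 0) * B s k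
              = (∑ t ∈ S, if B t k < 0 then B t k * L k t else 0) * B k k
                + ∑ s ∈ S.erase k, (∑ t ∈ S, if B t k < 0 then B t k * L s t else 0) * B s k :=
            hsumsplit _
          rw [W6, hBkk, mul_zero, zero_add] at h3
          omega
        have v5 : ∑ s ∈ S.erase k,
              (∑ t ∈ S, if B t k < 0 then B t k * L s t else 0) * max (B s k) 0 = 0 := by
          have h3 : ∑ s ∈ S, (∑ t ∈ S, if B t k < 0 then B t k * L s t else 0) * max (B s k) 0
              = (∑ t ∈ S, if B t k < 0 then B t k * L k t else 0) * max (B k k) 0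
                + ∑ s ∈ S.erase k,
                    (∑ t ∈ S, if B t k < 0 then B t k * L s t else 0) * max (B s k) 0 :=
            hsumsplit _
          rw [W5, hBkk, max_self, mul_zero, zero_add] at h3
          omega
        set Tk : ℤ := ∑ t ∈ S, (if B t k < 0 then B t k * L k t else 0) with hTk
        have v4 : ∑ s ∈ S.erase k, (∑ t ∈ S, if B t k < 0 then B t k * L s t else 0) * B s j
            = (if B j k < 0 then 2 * B j k else 0) - Tk * B k j := by
          have h3 : ∑ s ∈ S, (∑ t ∈ S, if B t k < 0 then B t k * L s t else 0) * B s j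
              = Tk * B k j
                + ∑ s ∈ S.erase k, (∑ t ∈ S, if B t k < 0 then B t k * L s t else 0) * B s j :=
            hsumsplit _
          rw [W4] at h3
          omega
        have v2 : ∑ s ∈ S.erase k, L s k * max (B s k) 0 = Tk + 2 := by
          have h3 : ∑ s ∈ S, L s k * max (B s k) 0
              = L k k * max (B k k) 0 + ∑ s ∈ S.erase k, L s k * max (B s k) 0 := hsumsplit _
          rw [hLkk, zero_mul, zero_add] at h3
          have h4 := hMN k
          rw [if_pos rfl] at h4
          have h5 : (∑ s ∈ S, if B s k < 0 then B s k * L k s else 0)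
              = -(∑ s ∈ S, if B s k < 0 then B s k * L s k else 0) := by
            rw [← Finset.sum_neg_distrib]
            refine Finset.sum_congr rfl fun s _ => ?_
            rw [hLskew k s]; split <;> ring
          have h6 : Tk = -(∑ s ∈ S, if B s k < 0 then B s k * L s k else 0) := by
            rw [hTk, h5]
          omega
        rw [v1, v2, v3, v4, v5, v6, hbj]
        by_cases hb : B k j < 0 <;> simp [hb] <;> ring_nf <;> omega
      · -- i ≠ k, j ≠ k
        have h1 : ∑ s ∈ S, muL L B k s i * muB B k s j
            = muL L B k k i * muB B k k j
              + ∑ s ∈ S.erase k, muL L B k s i * muB B k s j := hsumsplit _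
        have hmuLki : muL L B k k i
            = -L k i + ∑ t ∈ S, (if 0 < B t k then B t k * L t i else 0) := by
          have h2 : muL L B k k i = -L k i + ∑ᶠ t, (if 0 < B t k then B t k * L t i else 0) := by
            simp [muL, hik]
          rw [h2, hP i]
        rw [h1, hmuLki, hB'kj]
        have e2 : ∀ s ∈ S.erase k, muL L B k s i * muB B k s j
            = L s i * B s j + B k j * (L s i * max (B s k) 0)
              + (if B k j < 0 then -B k j else 0) * (L s i * B s k) := by
          intro s hs
          have hsk := Finset.ne_of_mem_erase hs
          have h2 : muL L B k s i = L s i := by simp [muL, hsk, hik]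
          rw [h2, hB'e s j hsk hjk]
          ring
        rw [Finset.sum_congr rfl e2]
        simp only [Finset.sum_add_distrib, ← Finset.mul_sum]
        have v1 : ∑ s ∈ S.erase k, L s i * B s j = (if i = j then 2 else 0) - L k i * B k j := by
          have h3 : ∑ s ∈ S, L s i * B s j
              = L k i * B k j + ∑ s ∈ S.erase k, L s i * B s j := hsumsplit _
          rw [hCj i] at h3
          omega
        have v3 : ∑ s ∈ S.erase k, L s i * B s k = 0 := by
          have h3 : ∑ s ∈ S, L s i * B s k
              = L k i * B k k + ∑ s ∈ S.erase k, L s i * B s k := hsumsplit _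
          rw [hCk i, if_neg hik, hBkk, mul_zero, zero_add] at h3
          omega
        have v2 : ∑ s ∈ S.erase k, L s i * max (B s k) 0
            = ∑ t ∈ S, (if 0 < B t k then B t k * L t i else 0) := by
          have h3 : ∑ s ∈ S, L s i * max (B s k) 0
              = L k i * max (B k k) 0 + ∑ s ∈ S.erase k, L s i * max (B s k) 0 := hsumsplit _
          rw [hBkk, max_self, mul_zero, zero_add] at h3
          rw [← h3]
          refine Finset.sum_congr rfl fun s _ => ?_
          rcases lt_trichotomy (B s k) 0 with h | h | h
          · rw [if_neg (by omega), max_eq_right h.le, mul_zero]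
          · rw [if_neg (by omega), h, max_self, mul_zero]
          · rw [if_pos h, max_eq_left h.le]; ring
        rw [v1, v2, v3]
        ring
  · -- part 5 : muB involution
    intro i j
    by_cases h : i = k ∨ j = k
    · simp only [muB, h, if_pos, if_true]; ring
    · push_neg at h
      have hc : ¬(i = k ∨ j = k) := by tauto
      rw [show muB (muB B k) k i j = (if i = k ∨ j = k then -(muB B k i j)
            else muB B k i j
              + (if muB B k i k < 0 then -1 else 1) * max (muB B k i k * muB B k k j) 0) from rfl,
        if_neg hc, hB'k i, hB'kj j,
        show muB B k i j = (if i = k ∨ j = k then -B i j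
            else B i j + (if B i k < 0 then -1 else 1) * max (B i k * B k j) 0) from rfl,
        if_neg hc]
      have hm : -B i k * -B k j = B i k * B k j := by ring
      rw [hm]
      have := sign_max_inv (B i k) (B k j)
      linarith
  · -- part 6 : muL involution
    intro i j
    by_cases hi : i = k <;> by_cases hj : j = k
    · rw [hi, hj]; simp [muL]
    · rw [hi]
      have h1 : muL (muL L B k) (muB B k) k k j
          = -(muL L B k k j) + ∑ᶠ s, (if 0 < muB B k s k then muB B k s k * muL L B k s j else 0) := by
        simp [muL, hj]
      rw [h1]
      have h2 : ∀ s, (if 0 < muB B k s k then muB B k s k * muL L B k s j else 0)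
          = -(if B s k < 0 then B s k * L s j else 0) := by
        intro s
        rw [hB'k s]
        by_cases h : B s k < 0
        · have hsk : s ≠ k := fun e => by rw [e, hBkk] at h; omega
          have : muL L B k s j = L s j := by simp [muL, hsk, hj]
          rw [if_pos (by omega), if_pos h, this]; ring
        · rw [if_neg (by omega), if_neg h, neg_zero]
      rw [finsum_congr h2, finsum_neg_distrib]
      have h3 : muL L B k k j = -L k j + ∑ᶠ s, (if 0 < B s k then B s k * L s j else 0) := by
        simp [muL, hj]
      rw [h3]
      have h4 := hzeroR j
      rw [if_neg hj] at h4
      linarith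
    · rw [hj]
      have h1 : muL (muL L B k) (muB B k) k i k
          = -(muL L B k i k) - ∑ᶠ s, (if muB B k s k < 0 then muB B k s k * muL L B k i s else 0) := by
        simp [muL, hi]
      rw [h1]
      have h2 : ∀ s, (if muB B k s k < 0 then muB B k s k * muL L B k i s else 0)
          = -(if 0 < B s k then B s k * L i s else 0) := by
        intro s
        rw [hB'k s]
        by_cases h : 0 < B s k
        · have hsk : s ≠ k := fun e => by rw [e, hBkk] at h; omega
          have : muL L B k i s = L i s := by simp [muL, hsk, hi]
          rw [if_pos (by omega), if_pos h, this]; ring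
        · rw [if_neg (by omega), if_neg h, neg_zero]
      rw [finsum_congr h2, finsum_neg_distrib]
      have h3 : muL L B k i k = -L i k - ∑ᶠ s, (if B s k < 0 then B s k * L i s else 0) := by
        simp [muL, hi]
      rw [h3]
      have h4 := hzeroL i
      rw [if_neg hi] at h4
      linarith
    · simp [muL, hi, hj]


end
end
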